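/- arXiv:1405.1377 — 4 statements merged into one kernel-verified Lean document; each statement's English description precedes it below -/
import Mathlib

section
/- Let u, s ∈ ℂ with |u| > 1 > |s| and set ρ = max(|u|^{-1}, |s|) < 1. There exist constants ε > 0 and C₀ > 0, depending only on u and s, with the following property. Let g₁, g₂ be analytic functions on the open unit bidisk 𝔹 = {(x,y) ∈ ℂ² : |x| < 1, |y| < 1} with sup_𝔹 |g₁| ≤ ε and sup_𝔹 |g₂| ≤ ε, and define f : 𝔹 → ℂ² by f(x,y) = (u x (1 + x y g₁(x,y)), s y (1 + x y g₂(x,y))). Then for every integer n ≥ 1 and every (x,y) with |x| ≤ 1/4 and |y| ≤ 1/2, the points defined inductively by p₀ = (x/u^n, y) and p_{j+1} = f(p_j) satisfy p_j ∈ 𝔹 for all 0 ≤ j ≤ n, and ‖p_n − (x, 0)‖ ≤ C₀ · n · ρ^n, where ‖(a,b)‖ = max(|a|,|b|). -/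
noncomputable section

/-- The open unit bidisk in `ℂ²`. -/
def unitBidisk : Set (ℂ × ℂ) := {p : ℂ × ℂ | ‖p.1‖ < 1 ∧ ‖p.2‖ < 1}

/-- The local normal form of a saddle germ: `(x,y) ↦ (ux(1+xy g₁(x,y)), sy(1+xy g₂(x,y)))`. -/
def saddleNormalForm (u s : ℂ) (g₁ g₂ : ℂ × ℂ → ℂ) (p : ℂ × ℂ) : ℂ × ℂ :=
  (u * p.1 * (1 + p.1 * p.2 * g₁ p), s * p.2 * (1 + p.1 * p.2 * g₂ p))

/-- each term of the geometric-type series `m ρ^m` is bounded by `(1-ρ)⁻¹`. -/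
lemma aux_nrhon (ρ : ℝ) (h0 : 0 ≤ ρ) (h1 : ρ < 1) (m : ℕ) :
    (m : ℝ) * ρ ^ m ≤ (1 - ρ)⁻¹ := by
  have h2 : (m : ℝ) * ρ ^ m = ∑ _k ∈ Finset.range m, ρ ^ m := by
    rw [Finset.sum_const, Finset.card_range, nsmul_eq_mul]
  have h3 : ∑ _k ∈ Finset.range m, ρ ^ m ≤ ∑ k ∈ Finset.range m, ρ ^ k :=
    Finset.sum_le_sum fun k hk =>
      pow_le_pow_of_le_one h0 h1.le (Nat.le_of_lt (Finset.mem_range.mp hk))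
  have h4 : ∑ k ∈ Finset.range m, ρ ^ k ≤ ∑' k : ℕ, ρ ^ k :=
    Summable.sum_le_tsum _ (fun i _ => pow_nonneg h0 i) (summable_geometric_of_lt_one h0 h1)
  rw [tsum_geometric_of_lt_one h0 h1] at h4
  linarith

set_option maxHeartbeats 1000000 in
/-- Lemma 4.2, renormalization. -/
theorem statement9 (u s : ℂ) (hu : 1 < ‖u‖) (hs : ‖s‖ < 1) :
    ∃ ε : ℝ, 0 < ε ∧ ∃ C₀ : ℝ, 0 < C₀ ∧
      ∀ g₁ g₂ : ℂ × ℂ → ℂ,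
        AnalyticOnNhd ℂ g₁ unitBidisk → AnalyticOnNhd ℂ g₂ unitBidisk →
        (∀ p ∈ unitBidisk, ‖g₁ p‖ ≤ ε) → (∀ p ∈ unitBidisk, ‖g₂ p‖ ≤ ε) →
        ∀ n : ℕ, 1 ≤ n → ∀ x y : ℂ, ‖x‖ ≤ 1 / 4 → ‖y‖ ≤ 1 / 2 →
          (∀ j ≤ n, (saddleNormalForm u s g₁ g₂)^[j] (x / u ^ n, y) ∈ unitBidisk) ∧
          ‖(saddleNormalForm u s g₁ g₂)^[n] (x / u ^ n, y) - (x, 0)‖ ≤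
            C₀ * n * (max ‖u‖⁻¹ ‖s‖) ^ n := by
  have hu0 : (0:ℝ) < ‖u‖ := lt_trans one_pos hu
  have hune : u ≠ 0 := by
    intro h
    rw [h, norm_zero] at hu; linarith
  set ρ := max ‖u‖⁻¹ ‖s‖ with hρdef
  set r := ‖u‖⁻¹ with hrdef
  have hr0 : 0 < r := inv_pos.mpr hu0
  have hUr : ‖u‖ * r = 1 := mul_inv_cancel₀ (ne_of_gt hu0)
  have hrρ : r ≤ ρ := le_max_left _ _
  have hsρ : ‖s‖ ≤ ρ := le_max_right _ _
  have hρ0 : 0 < ρ := lt_of_lt_of_le hr0 hrρ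
  have hρ1 : ρ < 1 := max_lt (inv_lt_one_of_one_lt₀ hu) hs
  set ε := (1 - ρ) / 4 with hεdef
  have hε0 : 0 < ε := by rw [hεdef]; linarith
  have hε1 : ε ≤ 1 := by rw [hεdef]; linarith
  refine ⟨ε, hε0, 1, one_pos, ?_⟩
  intro g₁ g₂ _ _ hg₁ hg₂ n hn x y hx hy
  set f := saddleNormalForm u s g₁ g₂ with hf
  -- the key smallness: ε * j * ρ^n ≤ 1/4 for j ≤ n
  have hM : ∀ j : ℕ, j ≤ n → ε * j * ρ ^ n ≤ 1 / 4 := by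
    intro j hj
    have h1 : (j : ℝ) * ρ ^ n ≤ (n : ℝ) * ρ ^ n := by
      apply mul_le_mul_of_nonneg_right _ (pow_nonneg hρ0.le n)
      exact_mod_cast hj
    have h2 : (n : ℝ) * ρ ^ n ≤ (1 - ρ)⁻¹ := aux_nrhon ρ hρ0.le hρ1 n
    have h1ρ : (1:ℝ) - ρ ≠ 0 := by linarith
    have h3 : ε * (1 - ρ)⁻¹ = 1 / 4 := by
      calc ε * (1 - ρ)⁻¹ = ((1 - ρ) * (1 - ρ)⁻¹) / 4 := by rw [hεdef]; ring
        _ = 1 / 4 := by rw [mul_inv_cancel₀ h1ρ]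
    calc ε * j * ρ ^ n = ε * ((j : ℝ) * ρ ^ n) := by ring
      _ ≤ ε * (1 - ρ)⁻¹ := by
          apply mul_le_mul_of_nonneg_left _ hε0.le
          linarith
      _ = 1 / 4 := h3
  -- the norm of x * u^j / u^n
  have hT : ∀ j : ℕ, j ≤ n → ‖x * u ^ j / u ^ n‖ ≤ 1 / 4 * r ^ (n - j) := by
    intro j hj
    have hUn : ((‖u‖:ℝ) ^ n) ≠ 0 := by positivity
    have hUnj : ((‖u‖:ℝ) ^ (n - j)) ≠ 0 := by positivity
    have hUeq : r ^ (n - j) = ‖u‖ ^ j / ‖u‖ ^ n := by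
      rw [eq_div_iff hUn]
      have h' : (‖u‖:ℝ) ^ n = ‖u‖ ^ (n - j) * ‖u‖ ^ j := (pow_sub_mul_pow ‖u‖ hj).symm
      rw [h', hrdef, inv_pow, ← mul_assoc, inv_mul_cancel₀ hUnj, one_mul]
    rw [norm_div, norm_mul, norm_pow, norm_pow, mul_div_assoc, ← hUeq]
    apply mul_le_mul_of_nonneg_right hx (by positivity)
  have hr1 : r ≤ 1 := le_trans hrρ hρ1.le
  -- main induction
  have key : ∀ j : ℕ, j ≤ n →
      ‖(f^[j] (x / u ^ n, y)).1 - x * u ^ j / u ^ n‖ ≤ ε * j * ρ ^ n * r ^ (n - j) ∧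
      ‖(f^[j] (x / u ^ n, y)).2‖ ≤ ρ ^ j * (1 / 2 + ε * j * ρ ^ n) := by
    intro j
    induction j with
    | zero =>
      intro _
      constructor
      · have h0 : (f^[0] (x / u ^ n, y)).1 - x * u ^ 0 / u ^ n = 0 := by
          simp
        rw [h0, norm_zero]
        have : (0:ℝ) ≤ ε * (0:ℕ) * ρ ^ n * r ^ (n - 0) := by
          simp
        exact this
      · have h0 : (f^[0] (x / u ^ n, y)).2 = y := rfl
        rw [h0]
        have : ρ ^ (0:ℕ) * (1 / 2 + ε * (0:ℕ) * ρ ^ n) = 1 / 2 := by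
          simp
        rw [this]
        exact hy
    | succ j ih =>
      intro hj1
      have hj : j ≤ n := Nat.le_of_succ_le hj1
      obtain ⟨ihA, ihB⟩ := ih hj
      set q := f^[j] (x / u ^ n, y) with hq
      set a := q.1 with ha
      set b := q.2 with hb
      -- derived bounds at step j
      have hεjP : ε * j * ρ ^ n ≤ 1 / 4 := hM j hj
      have hεjP0 : 0 ≤ ε * j * ρ ^ n := by positivity
      have hrnj0 : (0:ℝ) ≤ r ^ (n - j) := by positivity
      have hρj0 : (0:ℝ) ≤ ρ ^ j := by positivity
      have hna : ‖a‖ ≤ 1 / 2 * r ^ (n - j) := by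
        have h1 : ‖a‖ ≤ ‖a - x * u ^ j / u ^ n‖ + ‖x * u ^ j / u ^ n‖ := by
          have := norm_add_le (a - x * u ^ j / u ^ n) (x * u ^ j / u ^ n)
          simpa using this
        have h2 := hT j hj
        have h3 : ε * j * ρ ^ n * r ^ (n - j) ≤ 1 / 4 * r ^ (n - j) :=
          mul_le_mul_of_nonneg_right hεjP hrnj0
        linarith
      have hnb : ‖b‖ ≤ 3 / 4 * ρ ^ j := by
        have : ρ ^ j * (1 / 2 + ε * j * ρ ^ n) ≤ ρ ^ j * (3 / 4) := by
          apply mul_le_mul_of_nonneg_left _ hρj0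
          linarith
        linarith
      have hrpow : r ^ (n - j) ≤ 1 := pow_le_one₀ hr0.le hr1
      have hρpow : ρ ^ j ≤ 1 := pow_le_one₀ hρ0.le hρ1.le
      have hmem : q ∈ unitBidisk := by
        constructor
        · calc ‖q.1‖ ≤ 1 / 2 * r ^ (n - j) := hna
            _ ≤ 1 / 2 * 1 := by linarith
            _ < 1 := by norm_num
        · calc ‖q.2‖ ≤ 3 / 4 * ρ ^ j := hnb
            _ ≤ 3 / 4 * 1 := by linarith
            _ < 1 := by norm_num
      have hG₁ : ‖g₁ q‖ ≤ ε := hg₁ q hmem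
      have hG₂ : ‖g₂ q‖ ≤ ε := hg₂ q hmem
      have ha0 : (0:ℝ) ≤ ‖a‖ := norm_nonneg _
      have hb0 : (0:ℝ) ≤ ‖b‖ := norm_nonneg _
      -- step identities
      have hstep : f^[j+1] (x / u ^ n, y) = f q := by
        rw [hq, ← Function.iterate_succ_apply' f j]
      have hexp : n - j = (n - (j + 1)) + 1 := by omega
      set A := r ^ (n - (j + 1)) with hA
      have hA0 : (0:ℝ) ≤ A := by positivity
      have hrA : r ^ (n - j) = r * A := by rw [hexp, pow_succ]; ring
      have hUA : ‖u‖ * (r * A) = A := by rw [← mul_assoc, hUr, one_mul]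
      have hρn : ρ ^ (n - j) * ρ ^ j = ρ ^ n := by
        rw [← pow_add, Nat.sub_add_cancel hj]
      have hrA0 : (0:ℝ) ≤ r * A := mul_nonneg hr0.le hA0
      have hrAρ : (r * A) * ρ ^ j ≤ ρ ^ n := by
        have h1 : r * A ≤ ρ ^ (n - j) := by
          rw [← hrA]; exact pow_le_pow_left₀ hr0.le hrρ _
        calc (r * A) * ρ ^ j ≤ ρ ^ (n - j) * ρ ^ j :=
              mul_le_mul_of_nonneg_right h1 hρj0
          _ = ρ ^ n := hρn
      have hP0 : (0:ℝ) ≤ ρ ^ n := pow_nonneg hρ0.le n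
      rw [hrA] at ihA hna
      constructor
      · -- first coordinate
        rw [hstep]
        have hfq1 : (f q).1 = u * (a - x * u ^ j / u ^ n) + u * a * a * b * g₁ q +
            x * u ^ (j + 1) / u ^ n := by
          show u * q.1 * (1 + q.1 * q.2 * g₁ q) = _
          rw [← ha, ← hb, pow_succ]
          field_simp
          ring
        have h1 : ‖(f q).1 - x * u ^ (j+1) / u ^ n‖ ≤
            ‖u‖ * ‖a - x * u ^ j / u ^ n‖ + ‖u‖ * ‖a‖ * ‖a‖ * ‖b‖ * ‖g₁ q‖ := by
          rw [hfq1, add_sub_cancel_right]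
          calc ‖u * (a - x * u ^ j / u ^ n) + u * a * a * b * g₁ q‖ ≤
              ‖u * (a - x * u ^ j / u ^ n)‖ + ‖u * a * a * b * g₁ q‖ := norm_add_le _ _
            _ = ‖u‖ * ‖a - x * u ^ j / u ^ n‖ + ‖u‖ * ‖a‖ * ‖a‖ * ‖b‖ * ‖g₁ q‖ := by
                simp [norm_mul]
        have h2 : ‖u‖ * ‖a - x * u ^ j / u ^ n‖ ≤ ε * j * ρ ^ n * A := by
          calc ‖u‖ * ‖a - x * u ^ j / u ^ n‖ ≤ ‖u‖ * (ε * j * ρ ^ n * (r * A)) :=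
                mul_le_mul_of_nonneg_left ihA hu0.le
            _ = ε * j * ρ ^ n * (‖u‖ * (r * A)) := by ring
            _ = ε * j * ρ ^ n * A := by rw [hUA]
        have h3 : ‖u‖ * ‖a‖ * ‖a‖ * ‖b‖ * ‖g₁ q‖ ≤ ε * ρ ^ n * A := by
          have hx1 : (0:ℝ) ≤ 1/2 * (r * A) := by linarith
          have hx2 : (0:ℝ) ≤ 3/4 * ρ ^ j := by linarith
          have m1 : ‖u‖ * ‖a‖ ≤ ‖u‖ * (1/2 * (r * A)) :=
            mul_le_mul_of_nonneg_left hna hu0.le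
          have m1' : (0:ℝ) ≤ ‖u‖ * (1/2 * (r * A)) := mul_nonneg hu0.le hx1
          have m2 : ‖u‖ * ‖a‖ * ‖a‖ ≤ ‖u‖ * (1/2 * (r * A)) * (1/2 * (r * A)) :=
            mul_le_mul m1 hna ha0 m1'
          have m2' : (0:ℝ) ≤ ‖u‖ * (1/2 * (r * A)) * (1/2 * (r * A)) :=
            mul_nonneg m1' hx1
          have m3 : ‖u‖ * ‖a‖ * ‖a‖ * ‖b‖ ≤
              ‖u‖ * (1/2 * (r * A)) * (1/2 * (r * A)) * (3/4 * ρ ^ j) :=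
            mul_le_mul m2 hnb hb0 m2'
          have m3' : (0:ℝ) ≤ ‖u‖ * (1/2 * (r * A)) * (1/2 * (r * A)) * (3/4 * ρ ^ j) :=
            mul_nonneg m2' hx2
          have m4 : ‖u‖ * ‖a‖ * ‖a‖ * ‖b‖ * ‖g₁ q‖ ≤
              ‖u‖ * (1/2 * (r * A)) * (1/2 * (r * A)) * (3/4 * ρ ^ j) * ε :=
            mul_le_mul m3 hG₁ (norm_nonneg _) m3'
          have e1 : ‖u‖ * (1/2 * (r * A)) * (1/2 * (r * A)) * (3/4 * ρ ^ j) * ε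
              = (3/16) * ε * (‖u‖ * (r * A)) * ((r * A) * ρ ^ j) := by ring
          have e2 : (3/16 : ℝ) * ε * (‖u‖ * (r * A)) * ((r * A) * ρ ^ j)
              = (3/16) * ε * A * ((r * A) * ρ ^ j) := by rw [hUA]
          have m5 : (3/16 : ℝ) * ε * A * ((r * A) * ρ ^ j) ≤ (3/16) * ε * A * ρ ^ n := by
            apply mul_le_mul_of_nonneg_left hrAρ
            positivity
          have hX : (0:ℝ) ≤ ε * ρ ^ n * A := by positivity
          have m6 : (3/16 : ℝ) * ε * A * ρ ^ n ≤ ε * ρ ^ n * A := by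
            have e3 : (3/16 : ℝ) * ε * A * ρ ^ n = (3/16) * (ε * ρ ^ n * A) := by ring
            rw [e3]; linarith
          calc ‖u‖ * ‖a‖ * ‖a‖ * ‖b‖ * ‖g₁ q‖ ≤
              ‖u‖ * (1/2 * (r * A)) * (1/2 * (r * A)) * (3/4 * ρ ^ j) * ε := m4
            _ = (3/16) * ε * A * ((r * A) * ρ ^ j) := by rw [e1, e2]
            _ ≤ (3/16) * ε * A * ρ ^ n := m5
            _ ≤ ε * ρ ^ n * A := m6
        calc ‖(f q).1 - x * u ^ (j+1) / u ^ n‖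
            ≤ ε * j * ρ ^ n * A + ε * ρ ^ n * A := by linarith
          _ = ε * (j + 1 : ℕ) * ρ ^ n * A := by push_cast; ring
      · -- second coordinate
        rw [hstep]
        have h1 : ‖(f q).2‖ ≤ ‖s‖ * ‖b‖ * (1 + ‖a‖ * ‖b‖ * ‖g₂ q‖) := by
          show ‖s * q.2 * (1 + q.1 * q.2 * g₂ q)‖ ≤ _
          rw [norm_mul, norm_mul, ← ha, ← hb]
          apply mul_le_mul_of_nonneg_left _ (mul_nonneg (norm_nonneg s) hb0)
          calc ‖1 + a * b * g₂ q‖ ≤ ‖(1:ℂ)‖ + ‖a * b * g₂ q‖ := norm_add_le _ _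
            _ = 1 + ‖a‖ * ‖b‖ * ‖g₂ q‖ := by simp [norm_mul]
        have hab : ‖a‖ * ‖b‖ ≤ 3/8 * ρ ^ n := by
          have m1 : ‖a‖ * ‖b‖ ≤ (1/2 * (r * A)) * (3/4 * ρ ^ j) :=
            mul_le_mul hna hnb hb0 (by linarith)
          have e1 : (1/2 * (r * A)) * (3/4 * ρ ^ j) = 3/8 * ((r * A) * ρ ^ j) := by ring
          rw [e1] at m1
          have : (3/8 : ℝ) * ((r * A) * ρ ^ j) ≤ 3/8 * ρ ^ n := by linarith
          linarith
        have hsb : ‖s‖ * ‖b‖ ≤ ρ * (ρ ^ j * (1/2 + ε * j * ρ ^ n)) :=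
          mul_le_mul hsρ ihB hb0 hρ0.le
        have hsb' : (0:ℝ) ≤ ρ * (ρ ^ j * (1/2 + ε * j * ρ ^ n)) := by
          apply mul_nonneg hρ0.le
          apply mul_nonneg hρj0
          linarith
        have habg : ‖a‖ * ‖b‖ * ‖g₂ q‖ ≤ 3/8 * ρ ^ n * ε :=
          mul_le_mul hab hG₂ (norm_nonneg _) (by linarith)
        have h2 : ‖s‖ * ‖b‖ * (1 + ‖a‖ * ‖b‖ * ‖g₂ q‖) ≤
            ρ * (ρ ^ j * (1/2 + ε * j * ρ ^ n)) * (1 + 3/8 * ρ ^ n * ε) := by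
          apply mul_le_mul hsb _ _ hsb'
          · linarith
          · have : (0:ℝ) ≤ ‖a‖ * ‖b‖ * ‖g₂ q‖ :=
              mul_nonneg (mul_nonneg ha0 hb0) (norm_nonneg _)
            linarith
        have h3 : ρ * (ρ ^ j * (1/2 + ε * j * ρ ^ n)) * (1 + 3/8 * ρ ^ n * ε) ≤
            ρ ^ (j+1) * (1/2 + ε * (j+1:ℕ) * ρ ^ n) := by
          push_cast
          have hPle : ρ ^ n ≤ 1 := pow_le_one₀ hρ0.le hρ1.le
          have hw0 : (0:ℝ) ≤ ε * ρ ^ n := mul_nonneg hε0.le hP0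
          have hw1 : (ε * (j:ℝ) * ρ ^ n) * (ε * ρ ^ n) ≤ (1/4) * (ε * ρ ^ n) :=
            mul_le_mul_of_nonneg_right (hM j hj) hw0
          have hgoal : (1/2 + ε * j * ρ ^ n) * (1 + 3/8 * ρ ^ n * ε) ≤
              1/2 + ε * ((j:ℝ) + 1) * ρ ^ n := by nlinarith [hw0, hw1]
          calc ρ * (ρ ^ j * (1/2 + ε * j * ρ ^ n)) * (1 + 3/8 * ρ ^ n * ε)
              = ρ ^ (j+1) * ((1/2 + ε * j * ρ ^ n) * (1 + 3/8 * ρ ^ n * ε)) := by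
                rw [pow_succ]; ring
            _ ≤ ρ ^ (j+1) * (1/2 + ε * ((j:ℝ) + 1) * ρ ^ n) := by
                apply mul_le_mul_of_nonneg_left hgoal
                positivity
        calc ‖(f q).2‖ ≤ ‖s‖ * ‖b‖ * (1 + ‖a‖ * ‖b‖ * ‖g₂ q‖) := h1
          _ ≤ ρ * (ρ ^ j * (1/2 + ε * j * ρ ^ n)) * (1 + 3/8 * ρ ^ n * ε) := h2
          _ ≤ ρ ^ (j+1) * (1/2 + ε * (j+1:ℕ) * ρ ^ n) := h3
  -- conclude
  constructor
  · intro j hj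
    obtain ⟨hA', hB'⟩ := key j hj
    have hεjP : ε * j * ρ ^ n ≤ 1 / 4 := hM j hj
    have hrnj0 : (0:ℝ) ≤ r ^ (n - j) := by positivity
    have hrpow : r ^ (n - j) ≤ 1 := pow_le_one₀ hr0.le hr1
    have hρj0 : (0:ℝ) ≤ ρ ^ j := by positivity
    have hρpow : ρ ^ j ≤ 1 := pow_le_one₀ hρ0.le hρ1.le
    have hT' := hT j hj
    constructor
    · have h1 : ‖(f^[j] (x / u ^ n, y)).1‖ ≤
          ‖(f^[j] (x / u ^ n, y)).1 - x * u ^ j / u ^ n‖ + ‖x * u ^ j / u ^ n‖ := by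
        have := norm_add_le ((f^[j] (x / u ^ n, y)).1 - x * u ^ j / u ^ n)
          (x * u ^ j / u ^ n)
        simpa using this
      have h3 : ε * j * ρ ^ n * r ^ (n - j) ≤ 1 / 4 * r ^ (n - j) :=
        mul_le_mul_of_nonneg_right hεjP hrnj0
      calc ‖(f^[j] (x / u ^ n, y)).1‖ ≤ 1/2 := by linarith
        _ < 1 := by norm_num
    · have h4 : ρ ^ j * (1 / 2 + ε * j * ρ ^ n) ≤ ρ ^ j * (3/4) := by
        apply mul_le_mul_of_nonneg_left _ hρj0
        linarith
      calc ‖(f^[j] (x / u ^ n, y)).2‖ ≤ ρ ^ j * (3/4) := by linarith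
        _ ≤ 3/4 := by linarith
        _ < 1 := by norm_num
  · obtain ⟨hA', hB'⟩ := key n le_rfl
    have hxx : x * u ^ n / u ^ n = x := by
      rw [mul_div_assoc, div_self (pow_ne_zero n hune), mul_one]
    rw [hxx, Nat.sub_self, pow_zero, mul_one] at hA'
    have hn1 : (1:ℝ) ≤ (n:ℝ) := by exact_mod_cast hn
    have hP0 : (0:ℝ) ≤ ρ ^ n := pow_nonneg hρ0.le n
    have hεnP : ε * n * ρ ^ n ≤ 1 * n * ρ ^ n := by
      apply mul_le_mul_of_nonneg_right _ hP0
      apply mul_le_mul_of_nonneg_right hε1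
      positivity
    have hnorm : ‖(f^[n] (x / u ^ n, y)) - (x, 0)‖ =
        max ‖(f^[n] (x / u ^ n, y)).1 - x‖ ‖(f^[n] (x / u ^ n, y)).2‖ := by
      rw [Prod.norm_def]
      simp
    rw [hnorm]
    apply max_le
    · calc ‖(f^[n] (x / u ^ n, y)).1 - x‖ ≤ ε * n * ρ ^ n := hA'
        _ ≤ 1 * n * ρ ^ n := hεnP
        _ = 1 * n * ρ ^ n := rfl
    · have hεnP2 : ε * n * ρ ^ n ≤ 1/4 := hM n le_rfl
      have h5 : ρ ^ n * (1/2 + ε * n * ρ ^ n) ≤ ρ ^ n * 1 := by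
        apply mul_le_mul_of_nonneg_left _ hP0
        linarith
      have h6 : ρ ^ n * 1 ≤ 1 * n * ρ ^ n := by
        rw [mul_one, one_mul]
        nlinarith
      calc ‖(f^[n] (x / u ^ n, y)).2‖ ≤ ρ ^ n * 1 := by linarith
        _ ≤ 1 * n * ρ ^ n := h6
end
end

section
/- Let f be a finite composition of generalized Hénon maps over ℂ, and let p₀ be a saddle fixed point of f: f(p₀) = p₀ and the eigenvalues u, s of the Jacobian matrix Df(p₀) satisfy |u| > 1 > |s|. Then the stable manifold W^s(p₀) = {q ∈ ℂ² : f^n(q) → p₀ as n → ∞} is not contained in the set K⁻ = {q ∈ ℂ² : sup_{n ≥ 0} ‖f^{-n}(q)‖ < ∞} of points with bounded backward orbit; that is, there exists q with f^n(q) → p₀ as n → ∞ whose backward orbit (f^{-n}(q))_{n ≥ 0} is unbounded. -/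
open MvPolynomial

noncomputable section

/-- Evaluate a pair of bivariate polynomials at a point of `K × K`. -/
def evalPair {K : Type*} [CommSemiring K] (P Q : MvPolynomial (Fin 2) K) (p : K × K) : K × K :=
  (MvPolynomial.eval ![p.1, p.2] P, MvPolynomial.eval ![p.1, p.2] Q)

/-- A map `K² → K²` is a polynomial map if it is given coordinatewise by polynomials. -/
def IsPolyMap {K : Type*} [CommSemiring K] (f : K × K → K × K) : Prop :=
  ∃ P Q : MvPolynomial (Fin 2) K, ∀ p, f p = evalPair P Q p

/-- A polynomial automorphism of the affine plane: a bijection such that it and its inverse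
are both polynomial maps. -/
def IsPolyAut {K : Type*} [CommSemiring K] (f : Equiv.Perm (K × K)) : Prop :=
  IsPolyMap (⇑f) ∧ IsPolyMap (⇑f.symm)

/-- `f` has degree `d` : it is given coordinatewise by a pair of polynomials whose maximum
total degree is `d`. -/
def HasDeg {K : Type*} [CommSemiring K] (f : K × K → K × K) (d : ℕ) : Prop :=
  ∃ P Q : MvPolynomial (Fin 2) K, (∀ p, f p = evalPair P Q p) ∧
    max P.totalDegree Q.totalDegree = d

/-- `f` is of Hénon type: some conjugate `h = φ ∘ f ∘ φ⁻¹` satisfies `deg h = d ≥ 2` and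
`deg (h^n) = d^n` for all `n ≥ 1`. -/
def HenonType {K : Type*} [CommSemiring K] (f : Equiv.Perm (K × K)) : Prop :=
  IsPolyAut f ∧ ∃ (φ : Equiv.Perm (K × K)) (d : ℕ), IsPolyAut φ ∧ 2 ≤ d ∧
    ∀ n : ℕ, 1 ≤ n → HasDeg (⇑((φ * f * φ⁻¹) ^ n)) (d ^ n)

/-- `j` is the (constant) value of the Jacobian determinant of `f`. -/
def HasJacobian {K : Type*} [CommRing K] (f : Equiv.Perm (K × K)) (j : K) : Prop :=
  ∃ P Q : MvPolynomial (Fin 2) K, (∀ p, f p = evalPair P Q p) ∧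
    ∀ p : K × K,
      eval ![p.1, p.2] (pderiv 0 P) * eval ![p.1, p.2] (pderiv 1 Q)
        - eval ![p.1, p.2] (pderiv 1 P) * eval ![p.1, p.2] (pderiv 0 Q) = j

/-- `p` is a periodic point of `f`. -/
def IsPeriodicPt {K : Type*} (f : Equiv.Perm (K × K)) (p : K × K) : Prop :=
  ∃ n : ℕ, 1 ≤ n ∧ (f ^ n) p = p

/-- `M` is the Jacobian matrix of the polynomial map `f` at the point `p`. -/
def HasJacMatrix {K : Type*} [CommRing K] (f : K × K → K × K) (p : K × K)
    (M : Matrix (Fin 2) (Fin 2) K) : Prop :=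
  ∃ P Q : MvPolynomial (Fin 2) K, (∀ q, f q = evalPair P Q q) ∧
    M = !![eval ![p.1, p.2] (pderiv 0 P), eval ![p.1, p.2] (pderiv 1 P);
           eval ![p.1, p.2] (pderiv 0 Q), eval ![p.1, p.2] (pderiv 1 Q)]

end

/-- A generalized Hénon map `(x,y) ↦ (a y, x + P(y))` with `a ≠ 0` and `deg P ≥ 2`. -/
def IsGenHenon (h : ℂ × ℂ → ℂ × ℂ) : Prop :=
  ∃ (a : ℂ) (P : Polynomial ℂ), a ≠ 0 ∧ 2 ≤ P.natDegree ∧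
    ∀ p : ℂ × ℂ, h p = (a * p.2, p.1 + P.eval p.2)

/-!
The inverse map `f⁻¹` fixes `p₀` and its derivative there has the eigenvalues `s⁻¹` (expanding)
and `u⁻¹` (contracting). Following Poincaré, the limits `ζ t = lim (f⁻¹)ⁿ (p₀ + sⁿ t v)`, along an
eigenvector `v` for `s`, define a holomorphic disc tangent to `v` with `f⁻¹ (ζ (s t)) = ζ t`; the
same relation extends `ζ` to an entire curve `Ψ : ℂ → ℂ²` with `f ∘ Ψ = Ψ ∘ (s • ·)`, so `Ψ` lies in
`W^s(p₀)`. Since `Ψ` is nonconstant, it is unbounded by Liouville's theorem.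

Hénon maps admit a filtration: outside a large bidisc, points with `|x| ≤ |y|` escape to infinity
under forward iteration and points with `|y| ≤ |x|` under backward iteration. A point `Ψ t` of
large norm has a convergent forward orbit, so it is of the second kind and its backward orbit is
unbounded.
-/

open Filter Topology Metric Set

section Filtration

theorem Polynomial.exists_mul_norm_le_norm_eval (P : Polynomial ℂ) (hP : 2 ≤ P.natDegree)
    (C : ℝ) : ∃ R₀, ∀ y : ℂ, R₀ ≤ ‖y‖ → C * ‖y‖ ≤ ‖P.eval y‖ := by
  have hdeg : 0 < P.divX.degree := by
    rw [← Polynomial.natDegree_pos_iff_degree_pos,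
      Polynomial.natDegree_divX_eq_natDegree_tsub_one]
    omega
  have hlarge := (P.divX.tendsto_norm_atTop hdeg tendsto_norm_cobounded_atTop).eventually_ge_atTop
    (C + ‖P.coeff 0‖)
  rw [← comap_norm_atTop, eventually_comap, eventually_atTop] at hlarge
  obtain ⟨R₁, hR₁⟩ := hlarge
  refine ⟨max R₁ 1, fun y hy => ?_⟩
  have hy1 : 1 ≤ ‖y‖ := le_of_max_le_right hy
  have hD := hR₁ _ (le_of_max_le_left hy) y rfl
  have hsplit : P.eval y = y * P.divX.eval y + P.coeff 0 := by
    calc P.eval y = (Polynomial.X * P.divX + Polynomial.C (P.coeff 0)).eval y := by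
          rw [P.X_mul_divX_add]
      _ = y * P.divX.eval y + P.coeff 0 := by
          simp only [Polynomial.eval_add, Polynomial.eval_mul, Polynomial.eval_X, Polynomial.eval_C]
  have := norm_sub_norm_le (y * P.divX.eval y) (-P.coeff 0)
  rw [sub_neg_eq_add, ← hsplit, norm_neg, norm_mul] at this
  nlinarith [norm_nonneg (P.coeff 0)]

-- The regions `V⁺` and `V⁻` of the filtration of `ℂ²` adapted to Hénon maps.
def vPlus (R : ℝ) : Set (ℂ × ℂ) := {q | ‖q.1‖ ≤ ‖q.2‖ ∧ R ≤ ‖q.2‖}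

def vMinus (R : ℝ) : Set (ℂ × ℂ) := {q | ‖q.2‖ ≤ ‖q.1‖ ∧ R ≤ ‖q.1‖}

theorem mem_vPlus_or_mem_vMinus {R : ℝ} {q : ℂ × ℂ} (hq : R ≤ ‖q‖) :
    q ∈ vPlus R ∨ q ∈ vMinus R := by
  rw [Prod.norm_def] at hq
  rcases le_total ‖q.1‖ ‖q.2‖ with h | h
  · exact Or.inl ⟨h, by rwa [max_eq_right h] at hq⟩
  · exact Or.inr ⟨h, by rwa [max_eq_left h] at hq⟩

/-- The backward clause is phrased through preimages under `F`, so that it controls `F⁻¹` without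
an explicit formula for the inverse. -/
def Escapes (F : ℂ × ℂ → ℂ × ℂ) (R : ℝ) : Prop :=
  (∀ q ∈ vPlus R, F q ∈ vPlus R ∧ 2 * ‖q.2‖ ≤ ‖(F q).2‖) ∧
    ∀ q, F q ∈ vMinus R → q ∈ vMinus R ∧ 2 * ‖(F q).1‖ ≤ ‖q.1‖

theorem Escapes.comp {F G : ℂ × ℂ → ℂ × ℂ} {R : ℝ} (hF : Escapes F R) (hG : Escapes G R) :
    Escapes (F ∘ G) R := by
  refine ⟨fun q hq => ?_, fun q hq => ?_⟩
  · obtain ⟨hGq, hG2⟩ := hG.1 q hq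
    obtain ⟨hFGq, hF2⟩ := hF.1 _ hGq
    exact ⟨hFGq, by dsimp; linarith [norm_nonneg (G q).2]⟩
  · obtain ⟨hGq, hF1⟩ := hF.2 _ hq
    obtain ⟨hq', hG1⟩ := hG.2 _ hGq
    exact ⟨hq', by dsimp; linarith [norm_nonneg (G q).1]⟩

theorem IsGenHenon.exists_escapes {h : ℂ × ℂ → ℂ × ℂ} (hh : IsGenHenon h) :
    ∃ R₀, ∀ R ≥ R₀, Escapes h R := by
  obtain ⟨a, P, ha, hP, hh⟩ := hh
  obtain rfl : h = fun p => (a * p.2, p.1 + P.eval p.2) := funext hh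
  obtain ⟨R₁, hR₁⟩ := P.exists_mul_norm_le_norm_eval hP (3 * ‖a‖ + 3)
  have ha' : 0 < ‖a‖ := norm_pos_iff.mpr ha
  have hlow : ∀ x y : ℂ, R₁ ≤ ‖y‖ → (3 * ‖a‖ + 3) * ‖y‖ - ‖x‖ ≤ ‖x + P.eval y‖ :=
    fun x y hy => by
      have := norm_sub_norm_le (P.eval y) (-x)
      rw [sub_neg_eq_add, norm_neg, add_comm] at this
      linarith [hR₁ y hy]
  refine ⟨max R₁ (‖a‖ * R₁), fun R hR =>
    ⟨fun q ⟨hq, hqR⟩ => ?_, fun q ⟨hq, hqR⟩ => ?_⟩⟩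
  · have := hlow q.1 q.2 (by linarith [le_max_left R₁ (‖a‖ * R₁)])
    simp only [vPlus, Set.mem_ofPred_eq, norm_mul]
    refine ⟨⟨?_, ?_⟩, ?_⟩ <;> nlinarith [norm_nonneg q.2]
  · simp only [norm_mul] at hq hqR
    have hy : R₁ ≤ ‖q.2‖ :=
      le_of_mul_le_mul_left (by linarith [le_max_right R₁ (‖a‖ * R₁)]) ha'
    have := hlow q.1 q.2 hy
    simp only [vMinus, Set.mem_ofPred_eq, norm_mul]
    refine ⟨⟨?_, ?_⟩, ?_⟩ <;> nlinarith [norm_nonneg q.2]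

theorem exists_escapes_foldr {L : List (ℂ × ℂ → ℂ × ℂ)} (hL : L ≠ [])
    (hLhen : ∀ h ∈ L, IsGenHenon h) : ∃ R₀, ∀ R ≥ R₀, Escapes (L.foldr (· ∘ ·) id) R := by
  induction L with
  | nil => exact absurd rfl hL
  | cons h L ih =>
    obtain ⟨R₁, hR₁⟩ := (hLhen h List.mem_cons_self).exists_escapes
    rcases eq_or_ne L [] with rfl | hL'
    · exact ⟨R₁, by simpa using hR₁⟩
    obtain ⟨R₂, hR₂⟩ := ih hL' fun g hg => hLhen g (List.mem_cons_of_mem h hg)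
    exact ⟨max R₁ R₂, fun R hR =>
      (hR₁ R (le_of_max_le_left hR)).comp (hR₂ R (le_of_max_le_right hR))⟩

theorem Escapes.iterate_mem_vPlus {F : ℂ × ℂ → ℂ × ℂ} {R : ℝ} (hF : Escapes F R)
    {q : ℂ × ℂ} (hq : q ∈ vPlus R) (n : ℕ) :
    F^[n] q ∈ vPlus R ∧ 2 ^ n * ‖q.2‖ ≤ ‖(F^[n] q).2‖ := by
  induction n with
  | zero => simpa using hq
  | succ n ih =>
    obtain ⟨hFq, hF2⟩ := hF.1 _ ih.1
    rw [Function.iterate_succ_apply']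
    exact ⟨hFq, by rw [pow_succ]; linarith [ih.2]⟩

theorem Escapes.iterate_mem_vMinus {F g : ℂ × ℂ → ℂ × ℂ} {R : ℝ} (hF : Escapes F R)
    (hg : Function.RightInverse g F) {q : ℂ × ℂ} (hq : q ∈ vMinus R) (n : ℕ) :
    g^[n] q ∈ vMinus R ∧ 2 ^ n * ‖q.1‖ ≤ ‖(g^[n] q).1‖ := by
  induction n with
  | zero => simpa using hq
  | succ n ih =>
    obtain ⟨hgq, hg2⟩ := hF.2 (g (g^[n] q)) (by rw [hg]; exact ih.1)
    rw [hg] at hg2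
    rw [Function.iterate_succ_apply']
    exact ⟨hgq, by rw [pow_succ]; linarith [ih.2]⟩

theorem exists_lt_of_two_pow_mul_le {x : ℕ → ℝ} {c : ℝ} (hc : 0 < c)
    (hx : ∀ n, 2 ^ n * c ≤ x n) (B : ℝ) : ∃ n, B < x n := by
  obtain ⟨n, hn⟩ := pow_unbounded_of_one_lt (B / c) one_lt_two
  exact ⟨n, by linarith [(div_lt_iff₀ hc).mp hn, hx n]⟩

theorem Escapes.exists_lt_norm_iterate {F : ℂ × ℂ → ℂ × ℂ} {R : ℝ} (hF : Escapes F R)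
    (hR : 0 < R) {q : ℂ × ℂ} (hq : q ∈ vPlus R) (B : ℝ) : ∃ n, B < ‖F^[n] q‖ := by
  obtain ⟨n, hn⟩ := exists_lt_of_two_pow_mul_le (hR.trans_le hq.2)
    (fun n => (hF.iterate_mem_vPlus hq n).2) B
  exact ⟨n, hn.trans_le (norm_snd_le _)⟩

theorem Escapes.exists_lt_norm_iterate_of_rightInverse {F g : ℂ × ℂ → ℂ × ℂ} {R : ℝ}
    (hF : Escapes F R) (hR : 0 < R) (hg : Function.RightInverse g F) {q : ℂ × ℂ}
    (hq : q ∈ vMinus R) (B : ℝ) : ∃ n, B < ‖g^[n] q‖ := by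
  obtain ⟨n, hn⟩ := exists_lt_of_two_pow_mul_le (hR.trans_le hq.2)
    (fun n => (hF.iterate_mem_vMinus hg hq n).2) B
  exact ⟨n, hn.trans_le (norm_fst_le _)⟩

end Filtration

section HenonInverse

theorem IsGenHenon.exists_analytic_leftInverse {h : ℂ × ℂ → ℂ × ℂ} (hh : IsGenHenon h) :
    ∃ g : ℂ × ℂ → ℂ × ℂ, (∀ x, AnalyticAt ℂ g x) ∧ Function.LeftInverse g h := by
  obtain ⟨a, P, ha, -, hh⟩ := hh
  refine ⟨fun q => (q.2 - P.eval (a⁻¹ * q.1), a⁻¹ * q.1), fun x => ?_, fun q => ?_⟩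
  · have hx : AnalyticAt ℂ (fun q : ℂ × ℂ => a⁻¹ * q.1) x :=
      analyticAt_const.mul analyticAt_fst
    refine (analyticAt_snd.sub ?_).prod hx
    simpa [Polynomial.aeval_def] using hx.aeval_polynomial P
  · simp [hh, ha]

theorem exists_analytic_leftInverse_foldr {L : List (ℂ × ℂ → ℂ × ℂ)}
    (hL : ∀ h ∈ L, IsGenHenon h) :
    ∃ g : ℂ × ℂ → ℂ × ℂ, (∀ x, AnalyticAt ℂ g x) ∧
      Function.LeftInverse g (L.foldr (· ∘ ·) id) := by
  induction L with
  | nil => exact ⟨id, fun _ => analyticAt_id, fun _ => rfl⟩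
  | cons h L ih =>
    obtain ⟨g₁, hg₁, hg₁h⟩ := (hL h List.mem_cons_self).exists_analytic_leftInverse
    obtain ⟨g₂, hg₂, hg₂L⟩ := ih fun h' hh' => hL h' (List.mem_cons_of_mem h hh')
    exact ⟨g₂ ∘ g₁, fun x => (hg₂ _).comp (hg₁ x), hg₁h.comp hg₂L⟩

end HenonInverse

section Jacobian

variable {𝕜 : Type*} [NontriviallyNormedField 𝕜]

theorem MvPolynomial.hasFDerivAt_eval {σ : Type*} [Fintype σ] (p : MvPolynomial σ 𝕜)
    (x : σ → 𝕜) :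
    HasFDerivAt (fun y => MvPolynomial.eval y p)
      (∑ i, (ContinuousLinearMap.proj i : (σ → 𝕜) →L[𝕜] 𝕜).smulRight
        (MvPolynomial.eval x (MvPolynomial.pderiv i p))) x := by
  classical
  induction p using MvPolynomial.induction_on with
  | C a => simpa using hasFDerivAt_const (𝕜 := 𝕜) a x
  | add p q hp hq =>
    simp only [map_add]
    refine (hp.fun_add hq).congr_fderiv ?_
    ext v
    simp [Finset.sum_add_distrib, mul_add]
  | mul_X p i hp =>
    simp only [map_mul, MvPolynomial.eval_X]
    refine (hp.fun_mul (hasFDerivAt_apply i x)).congr_fderiv ?_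
    ext v
    simp [Pi.single_apply, Finset.mul_sum, mul_add, Finset.sum_add_distrib, apply_ite, mul_comm,
      mul_left_comm]

def Matrix.toCLMProd (M : Matrix (Fin 2) (Fin 2) 𝕜) : 𝕜 × 𝕜 →L[𝕜] 𝕜 × 𝕜 :=
  (M 0 0 • ContinuousLinearMap.fst 𝕜 𝕜 𝕜 + M 0 1 • ContinuousLinearMap.snd 𝕜 𝕜 𝕜).prod
    (M 1 0 • ContinuousLinearMap.fst 𝕜 𝕜 𝕜 + M 1 1 • ContinuousLinearMap.snd 𝕜 𝕜 𝕜)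

@[simp]
theorem Matrix.toCLMProd_apply (M : Matrix (Fin 2) (Fin 2) 𝕜) (z : 𝕜 × 𝕜) :
    M.toCLMProd z = (M 0 0 * z.1 + M 0 1 * z.2, M 1 0 * z.1 + M 1 1 * z.2) := by
  simp [Matrix.toCLMProd]

theorem HasJacMatrix.hasFDerivAt {f : 𝕜 × 𝕜 → 𝕜 × 𝕜} {p : 𝕜 × 𝕜}
    {M : Matrix (Fin 2) (Fin 2) 𝕜} (hM : HasJacMatrix f p M) : HasFDerivAt f M.toCLMProd p := by
  obtain ⟨P, Q, hPQ, rfl⟩ := hM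
  obtain rfl : f = fun q => (MvPolynomial.eval ![q.1, q.2] P, MvPolynomial.eval ![q.1, q.2] Q) :=
    funext hPQ
  have hφ := (ContinuousLinearEquiv.finTwoArrow 𝕜 𝕜).symm.hasFDerivAt (x := p)
  refine (((P.hasFDerivAt_eval _).comp p hφ).prodMk
    ((Q.hasFDerivAt_eval _).comp p hφ)).congr_fderiv ?_
  ext <;> simp [Fin.sum_univ_two, mul_comm]

theorem Matrix.exists_toCLMProd_eq_smul (M : Matrix (Fin 2) (Fin 2) 𝕜) {c : 𝕜}
    (hc : c ^ 2 - M.trace * c + M.det = 0) : ∃ v ≠ 0, M.toCLMProd v = c • v := by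
  have hdet : (M - c • 1).det = 0 := by
    rw [Matrix.det_fin_two, ← hc, Matrix.trace_fin_two, Matrix.det_fin_two]
    simp only [Matrix.sub_apply, Matrix.smul_apply, Matrix.one_apply_eq, Matrix.one_apply_ne,
      smul_eq_mul, ne_eq, zero_ne_one, one_ne_zero, not_false_eq_true, mul_one, mul_zero, sub_zero]
    ring
  obtain ⟨v, hv0, hv⟩ := Matrix.exists_mulVec_eq_zero_iff.mpr hdet
  refine ⟨(v 0, v 1), fun h => hv0 ?_, ?_⟩
  · ext i
    fin_cases i
    exacts [congrArg Prod.fst h, congrArg Prod.snd h]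
  rw [Matrix.sub_mulVec, Matrix.smul_mulVec, Matrix.one_mulVec, sub_eq_zero] at hv
  have h0 := congrFun hv 0
  have h1 := congrFun hv 1
  simp only [Matrix.mulVec, dotProduct, Fin.sum_univ_two, Pi.smul_apply, smul_eq_mul] at h0 h1
  simp [h0, h1]

end Jacobian

section Analytic

variable {𝕜 E F : Type*} [NontriviallyNormedField 𝕜] [NormedAddCommGroup E]
  [NormedSpace 𝕜 E] [NormedAddCommGroup F] [NormedSpace 𝕜 F] {f : E → F} {f' : E →L[𝕜] F}
  {x : E}

theorem AnalyticAt.exists_norm_sub_sub_le (hf : AnalyticAt 𝕜 f x) (hf' : HasFDerivAt f f' x) :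
    ∃ C, ∃ δ > 0, ∀ y ∈ closedBall x δ, ∀ z ∈ closedBall x δ,
      ‖f y - f z - f' (y - z)‖ ≤ C * max ‖y - x‖ ‖z - x‖ * ‖y - z‖ := by
  obtain ⟨p, r, hp⟩ := hf
  obtain ⟨r', hr'0, hr'⟩ := ENNReal.lt_iff_exists_nnreal_btwn.mp hp.r_pos
  obtain ⟨C, hC⟩ := hp.image_sub_sub_deriv_le hr'
  have hp1 : f' = continuousMultilinearCurryFin1 𝕜 E F (p 1) :=
    hf'.unique hp.hasFPowerSeriesAt.hasFDerivAt
  have hr'0' : (0 : ℝ) < r' := by exact_mod_cast hr'0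
  have hball : closedBall x (r' / 2) ⊆ Metric.eball x r' := fun y hy => by
    rw [Metric.mem_closedBall] at hy
    rw [Metric.mem_eball, edist_dist, ENNReal.ofReal_lt_iff_lt_toReal dist_nonneg (by simp)]
    simp only [ENNReal.coe_toReal]
    linarith
  refine ⟨C, r' / 2, by positivity, fun y hy z hz => ?_⟩
  rw [hp1, continuousMultilinearCurryFin1_apply]
  convert hC y (hball hy) z (hball hz) using 4
  ext i
  fin_cases i
  rfl

theorem AnalyticAt.exists_lipschitz_quadratic (hf : AnalyticAt 𝕜 f x) (hf' : HasFDerivAt f f' x)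
    {L : ℝ} (hL : ‖f'‖ < L) :
    ∃ δ > 0, ∃ K ≥ 0,
      (∀ y ∈ closedBall x δ, ∀ z ∈ closedBall x δ, ‖f y - f z‖ ≤ L * ‖y - z‖) ∧
      ∀ y ∈ closedBall x δ, ‖f y - f x - f' (y - x)‖ ≤ K * ‖y - x‖ ^ 2 := by
  obtain ⟨C, δ₀, hδ₀, hC⟩ := hf.exists_norm_sub_sub_le hf'
  set C' := max C 0
  have hC'0 : 0 ≤ C' := le_max_right _ _
  obtain ⟨δ, hδ, hδδ₀, hδL⟩ : ∃ δ > 0, δ ≤ δ₀ ∧ ‖f'‖ + C' * δ ≤ L := by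
    have hδ' : 0 < min δ₀ ((L - ‖f'‖) / (C' + 1)) :=
      lt_min hδ₀ (div_pos (sub_pos.mpr hL) (by linarith))
    refine ⟨_, hδ', min_le_left _ _, ?_⟩
    have h := min_le_right δ₀ ((L - ‖f'‖) / (C' + 1))
    rw [le_div_iff₀ (by linarith)] at h
    nlinarith
  have hC' : ∀ y ∈ closedBall x δ, ∀ z ∈ closedBall x δ,
      ‖f y - f z - f' (y - z)‖ ≤ C' * max ‖y - x‖ ‖z - x‖ * ‖y - z‖ := fun y hy z hz =>
    (hC y (closedBall_subset_closedBall hδδ₀ hy) z (closedBall_subset_closedBall hδδ₀ hz)).trans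
      (by gcongr; exact le_max_left _ _)
  refine ⟨δ, hδ, C', hC'0, fun y hy z hz => ?_, fun y hy => ?_⟩
  · have hmax : max ‖y - x‖ ‖z - x‖ ≤ δ :=
      max_le (mem_closedBall_iff_norm.mp hy) (mem_closedBall_iff_norm.mp hz)
    calc ‖f y - f z‖ ≤ ‖f' (y - z)‖ + ‖f y - f z - f' (y - z)‖ := norm_le_insert' _ _
      _ ≤ ‖f'‖ * ‖y - z‖ + C' * δ * ‖y - z‖ := by
          gcongr
          · exact f'.le_opNorm _
          · exact (hC' y hy z hz).trans (by gcongr)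
      _ ≤ L * ‖y - z‖ := by nlinarith [norm_nonneg (y - z)]
  · simpa [sq, mul_assoc] using hC' y hy x (mem_closedBall_self hδ.le)

end Analytic

section InvariantCurve

variable {E : Type*} [NormedAddCommGroup E] [NormedSpace ℂ E]

/-- Poincaré's construction: when `G` expands the direction `e` by `s⁻¹`, its invariant curve
through `0` tangent to `e` is the limit of these approximants. -/
def approxCurve (G : E → E) (s : ℂ) (e : E) (n : ℕ) (t : ℂ) : E := G^[n] ((s ^ n * t) • e)

@[simp]
theorem approxCurve_zero (G : E → E) (s : ℂ) (e : E) (t : ℂ) :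
    approxCurve G s e 0 t = t • e := by
  simp [approxCurve]

theorem approxCurve_succ (G : E → E) (s : ℂ) (e : E) (n : ℕ) (t : ℂ) :
    approxCurve G s e (n + 1) t = G (approxCurve G s e n (s * t)) := by
  rw [approxCurve, approxCurve, Function.iterate_succ_apply', pow_succ, mul_assoc]

theorem Differentiable.approxCurve {G : E → E} (hG : Differentiable ℂ G) (s : ℂ) (e : E)
    (n : ℕ) : Differentiable ℂ (approxCurve G s e n) :=
  (hG.iterate n).comp ((differentiable_id.const_mul _).smul_const e)

/-- `Kc_bound` makes `‖approxCurve G s e n t - t • e‖ ≤ Kc * ‖t‖ ^ 2` propagate from `n` to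
`n + 1`, and `radius` keeps all approximants on `‖t‖ ≤ r` in the ball where `G` is
`L`-Lipschitz. -/
structure CurveBounds (G : E → E) (s : ℂ) (e : E) (L K Kc δ r : ℝ) : Prop where
  lipschitz :
    ∀ y ∈ closedBall (0 : E) δ, ∀ z ∈ closedBall (0 : E) δ, ‖G y - G z‖ ≤ L * ‖y - z‖
  quadratic : ∀ c : ℂ, ‖c • e‖ ≤ δ → ‖G (c • e) - (s⁻¹ * c) • e‖ ≤ K * ‖c‖ ^ 2
  L_nonneg : 0 ≤ L
  s_ne_zero : s ≠ 0
  norm_s_le_one : ‖s‖ ≤ 1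
  Kc_nonneg : 0 ≤ Kc
  Kc_bound : (L * Kc + K) * ‖s‖ ^ 2 ≤ Kc
  radius : ‖e‖ * r + Kc * r ^ 2 ≤ δ

namespace CurveBounds

variable {G : E → E} {e : E} {s : ℂ} {L K Kc δ r : ℝ}

theorem mem_closedBall (h : CurveBounds G s e L K Kc δ r) {w : E} {t : ℂ} (ht : ‖t‖ ≤ r)
    (hw : ‖w - t • e‖ ≤ Kc * ‖t‖ ^ 2) : w ∈ closedBall (0 : E) δ := by
  rw [mem_closedBall_zero_iff]
  calc ‖w‖ ≤ ‖t • e‖ + ‖w - t • e‖ := norm_le_insert' _ _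
    _ ≤ ‖e‖ * r + Kc * r ^ 2 := by
        rw [norm_smul, mul_comm]
        gcongr
        exact hw.trans (by gcongr; exact h.Kc_nonneg)
    _ ≤ δ := h.radius

theorem smul_mem_closedBall (h : CurveBounds G s e L K Kc δ r) {t : ℂ} (ht : ‖t‖ ≤ r) :
    t • e ∈ closedBall (0 : E) δ :=
  h.mem_closedBall ht (by rw [sub_self, norm_zero]; exact mul_nonneg h.Kc_nonneg (sq_nonneg _))

theorem norm_mul_le (h : CurveBounds G s e L K Kc δ r) {t : ℂ} (ht : ‖t‖ ≤ r) :
    ‖s * t‖ ≤ r := by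
  rw [norm_mul]
  exact (mul_le_of_le_one_left (norm_nonneg _) h.norm_s_le_one).trans ht

theorem norm_apply_sub_le (h : CurveBounds G s e L K Kc δ r) {t : ℂ} (ht : ‖s * t‖ ≤ r) :
    ‖G ((s * t) • e) - t • e‖ ≤ K * ‖s * t‖ ^ 2 := by
  have := h.quadratic (s * t) (mem_closedBall_zero_iff.mp (h.smul_mem_closedBall ht))
  rwa [← mul_assoc, inv_mul_cancel₀ h.s_ne_zero, one_mul] at this

theorem norm_approxCurve_sub_smul_le (h : CurveBounds G s e L K Kc δ r) (n : ℕ) {t : ℂ}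
    (ht : ‖t‖ ≤ r) : ‖approxCurve G s e n t - t • e‖ ≤ Kc * ‖t‖ ^ 2 := by
  induction n generalizing t with
  | zero =>
    rw [approxCurve_zero, sub_self, norm_zero]
    exact mul_nonneg h.Kc_nonneg (sq_nonneg _)
  | succ n ih =>
    have hst := h.norm_mul_le ht
    set w := approxCurve G s e n (s * t)
    rw [approxCurve_succ]
    calc ‖G w - t • e‖ ≤ ‖G w - G ((s * t) • e)‖ + ‖G ((s * t) • e) - t • e‖ :=
          norm_sub_le_norm_sub_add_norm_sub _ _ _
      _ ≤ L * (Kc * ‖s * t‖ ^ 2) + K * ‖s * t‖ ^ 2 := by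
          gcongr
          · exact (h.lipschitz _ (h.mem_closedBall hst (ih hst)) _
              (h.smul_mem_closedBall hst)).trans (by gcongr; exacts [h.L_nonneg, ih hst])
          · exact h.norm_apply_sub_le hst
      _ = (L * Kc + K) * ‖s‖ ^ 2 * ‖t‖ ^ 2 := by rw [norm_mul]; ring
      _ ≤ Kc * ‖t‖ ^ 2 := by gcongr; exact h.Kc_bound

theorem approxCurve_mem_closedBall (h : CurveBounds G s e L K Kc δ r) (n : ℕ) {t : ℂ}
    (ht : ‖t‖ ≤ r) : approxCurve G s e n t ∈ closedBall (0 : E) δ :=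
  h.mem_closedBall ht (h.norm_approxCurve_sub_smul_le n ht)

theorem norm_approxCurve_succ_sub_le (h : CurveBounds G s e L K Kc δ r) (n : ℕ) {t : ℂ}
    (ht : ‖t‖ ≤ r) :
    ‖approxCurve G s e (n + 1) t - approxCurve G s e n t‖ ≤
      K * ‖s * t‖ ^ 2 * (L * ‖s‖ ^ 2) ^ n := by
  induction n generalizing t with
  | zero => simpa [approxCurve_succ] using h.norm_apply_sub_le (h.norm_mul_le ht)
  | succ n ih =>
    have hst := h.norm_mul_le ht
    rw [approxCurve_succ G s e (n + 1), approxCurve_succ G s e n t]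
    calc ‖G (approxCurve G s e (n + 1) (s * t)) - G (approxCurve G s e n (s * t))‖
        ≤ L * ‖approxCurve G s e (n + 1) (s * t) - approxCurve G s e n (s * t)‖ :=
          h.lipschitz _ (h.approxCurve_mem_closedBall _ hst) _ (h.approxCurve_mem_closedBall _ hst)
      _ ≤ L * (K * ‖s * (s * t)‖ ^ 2 * (L * ‖s‖ ^ 2) ^ n) := by
          gcongr
          exacts [h.L_nonneg, ih hst]
      _ = K * ‖s * t‖ ^ 2 * (L * ‖s‖ ^ 2) ^ (n + 1) := by simp only [norm_mul]; ring

theorem exists_invariantCurve [CompleteSpace E] (h : CurveBounds G s e L K Kc δ r)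
    (hG : Differentiable ℂ G) (hK : 0 ≤ K) (hLs : L * ‖s‖ ^ 2 < 1) :
    ∃ ζ : ℂ → E, DifferentiableOn ℂ ζ (ball 0 r) ∧
      (∀ t ∈ ball (0 : ℂ) r, ‖ζ t - t • e‖ ≤ Kc * ‖t‖ ^ 2) ∧
      ∀ t ∈ ball (0 : ℂ) r, G (ζ (s * t)) = ζ t := by
  set q := L * ‖s‖ ^ 2
  have hq0 : 0 ≤ q := mul_nonneg h.L_nonneg (sq_nonneg _)
  have hdist : ∀ t : ℂ, ‖t‖ ≤ r → ∀ n,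
      dist (approxCurve G s e n t) (approxCurve G s e (n + 1) t) ≤ K * r ^ 2 * q ^ n := by
    intro t ht n
    rw [dist_comm, dist_eq_norm]
    refine (h.norm_approxCurve_succ_sub_le n ht).trans ?_
    have := h.norm_mul_le ht
    gcongr
  set ζ : ℂ → E := fun t => limUnder atTop fun n => approxCurve G s e n t
  have hlim : ∀ t : ℂ, ‖t‖ ≤ r → Tendsto (approxCurve G s e · t) atTop (𝓝 (ζ t)) :=
    fun t ht => (cauchySeq_of_le_geometric q _ hLs (hdist t ht)).tendsto_limUnder
  have hunif : TendstoUniformlyOn (approxCurve G s e) ζ atTop (ball 0 r) := by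
    rw [Metric.tendstoUniformlyOn_iff]
    intro ε hε
    have h0 : Tendsto (fun n => K * r ^ 2 * q ^ n / (1 - q)) atTop (𝓝 0) := by
      simpa using ((tendsto_pow_atTop_nhds_zero_of_lt_one hq0 hLs).const_mul
        (K * r ^ 2)).div_const (1 - q)
    filter_upwards [h0.eventually_lt_const hε] with n hn t ht
    have ht' : ‖t‖ ≤ r := (mem_ball_zero_iff.mp ht).le
    rw [dist_comm]
    exact (dist_le_of_le_geometric_of_tendsto q _ hLs (hdist t ht') (hlim t ht') n).trans_lt hn
  refine ⟨ζ, ?_, fun t ht => ?_, fun t ht => ?_⟩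
  · exact hunif.tendstoLocallyUniformlyOn.differentiableOn
      (Eventually.of_forall fun n => (hG.approxCurve s e n).differentiableOn) isOpen_ball
  · have ht' : ‖t‖ ≤ r := (mem_ball_zero_iff.mp ht).le
    exact le_of_tendsto ((hlim t ht').sub_const _).norm
      (Eventually.of_forall fun n => h.norm_approxCurve_sub_smul_le n ht')
  · have ht' : ‖t‖ ≤ r := (mem_ball_zero_iff.mp ht).le
    refine tendsto_nhds_unique ((hG.continuous.tendsto _).comp (hlim _ (h.norm_mul_le ht'))) ?_
    simpa only [Function.comp_def, ← approxCurve_succ] using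
      (hlim t ht').comp (tendsto_add_atTop_nat 1)

end CurveBounds

theorem hasDerivAt_zero_of_norm_sub_smul_le {𝕜 F : Type*} [NontriviallyNormedField 𝕜]
    [NormedAddCommGroup F] [NormedSpace 𝕜 F] {f : 𝕜 → F} {e : F} {C : ℝ}
    (h : ∀ᶠ t in 𝓝 0, ‖f t - t • e‖ ≤ C * ‖t‖ ^ 2) : HasDerivAt f e 0 := by
  have hf0 : f 0 = 0 := by simpa using h.self_of_nhds
  rw [hasDerivAt_iff_isLittleO_nhds_zero]
  simp only [zero_add, hf0, sub_zero]
  refine (Asymptotics.IsBigO.of_bound C ?_).trans_isLittleO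
    (Asymptotics.isLittleO_pow_id one_lt_two)
  simpa only [norm_pow] using h

theorem exists_invariantCurve [CompleteSpace E] {G : E → E} {Λ : E →L[ℂ] E}
    (hGd : Differentiable ℂ G) (hG : AnalyticAt ℂ G 0) (hΛ : HasFDerivAt G Λ 0) (hG0 : G 0 = 0)
    {s : ℂ} (hs0 : s ≠ 0) (hs : ‖s‖ < 1) (hΛs : ‖Λ‖ * ‖s‖ ^ 2 < 1) {e : E}
    (he : Λ e = s⁻¹ • e) :
    ∃ r > 0, ∃ ζ : ℂ → E, DifferentiableOn ℂ ζ (ball 0 r) ∧ ζ 0 = 0 ∧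
      HasDerivAt ζ e 0 ∧ ∀ t ∈ ball (0 : ℂ) r, G (ζ (s * t)) = ζ t := by
  have hs2 : 0 < ‖s‖ ^ 2 := by positivity
  obtain ⟨L, hΛL, hLs⟩ := exists_between ((lt_div_iff₀ hs2).mpr (by simpa using hΛs))
  rw [lt_div_iff₀ hs2] at hLs
  obtain ⟨δ, hδ, K, hK, hLip, hquad⟩ := hG.exists_lipschitz_quadratic hΛ hΛL
  set Kc := K * ‖e‖ ^ 2 / (1 - L * ‖s‖ ^ 2)
  have hKc0 : 0 ≤ Kc := div_nonneg (by positivity) (by linarith)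
  have hKc : (L * Kc + K * ‖e‖ ^ 2) * ‖s‖ ^ 2 ≤ Kc := by
    have : K * ‖e‖ ^ 2 = Kc * (1 - L * ‖s‖ ^ 2) := by
      rw [div_mul_cancel₀ _ (by linarith)]
    rw [this]
    have hs1 : ‖s‖ ^ 2 ≤ 1 := pow_le_one₀ (norm_nonneg s) hs.le
    nlinarith [mul_nonneg (mul_nonneg hKc0 (sub_nonneg.mpr hs1)) (sub_nonneg.mpr hLs.le)]
  obtain ⟨r, hr0, hr⟩ : ∃ r > 0, ‖e‖ * r + Kc * r ^ 2 ≤ δ := by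
    have hM : 0 < ‖e‖ + Kc + 1 := by positivity
    refine ⟨min 1 (δ / (‖e‖ + Kc + 1)), lt_min one_pos (by positivity), ?_⟩
    have h1 := min_le_left 1 (δ / (‖e‖ + Kc + 1))
    have h2 := (le_div_iff₀ hM).mp (min_le_right 1 (δ / (‖e‖ + Kc + 1)))
    have h0 : 0 ≤ min 1 (δ / (‖e‖ + Kc + 1)) := le_min zero_le_one (by positivity)
    nlinarith [mul_nonneg hKc0 (mul_nonneg h0 (sub_nonneg.mpr h1))]
  have hbounds : CurveBounds G s e L (K * ‖e‖ ^ 2) Kc δ r := by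
    refine ⟨hLip, fun c hc => ?_, (norm_nonneg _).trans hΛL.le, hs0, hs.le, hKc0, hKc, hr⟩
    have := hquad (c • e) (mem_closedBall_zero_iff.mpr hc)
    rwa [hG0, sub_zero, sub_zero, map_smul, he, smul_smul, mul_comm c, norm_smul, mul_pow,
      ← mul_assoc, mul_right_comm] at this
  obtain ⟨ζ, hζd, hζe, hζG⟩ := hbounds.exists_invariantCurve hGd (by positivity) hLs
  refine ⟨r, hr0, ζ, hζd, by simpa using hζe 0 (mem_ball_self hr0),
    hasDerivAt_zero_of_norm_sub_smul_le (Filter.mem_of_superset (ball_mem_nhds 0 hr0) hζe), hζG⟩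

theorem exists_entire_extension {g : E → E} (hg : Differentiable ℂ g) {s : ℂ} (hs : ‖s‖ < 1)
    {r : ℝ} (hr : 0 < r) {ψ : ℂ → E} (hψ : DifferentiableOn ℂ ψ (ball 0 r))
    (hψg : ∀ t ∈ ball (0 : ℂ) r, g (ψ (s * t)) = ψ t) :
    ∃ Ψ : ℂ → E, Differentiable ℂ Ψ ∧ EqOn Ψ ψ (ball 0 r) ∧ ∀ t, g (Ψ (s * t)) = Ψ t := by
  set W : ℕ → ℂ → E := fun m t => g^[m] (ψ (s ^ m * t))
  have hsmall : ∀ c : ℝ, ∃ m : ℕ, ‖s‖ ^ m * c < r := fun c =>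
    (((tendsto_pow_atTop_nhds_zero_of_lt_one (norm_nonneg s) hs).mul_const c).eventually_lt_const
      (by simpa using hr)).exists
  have hmono : ∀ {m n : ℕ} (t : ℂ), m ≤ n → ‖s ^ n * t‖ ≤ ‖s ^ m * t‖ := fun t hmn => by
    simp only [norm_mul, norm_pow]
    gcongr ?_ * _
    exact pow_le_pow_of_le_one (norm_nonneg s) hs.le hmn
  have hstable : ∀ {m : ℕ} {t : ℂ}, ‖s ^ m * t‖ < r → ∀ n ≥ m, W n t = W m t := by
    intro m t hm n hmn
    induction n, hmn using Nat.le_induction with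
    | base => rfl
    | succ n hmn ih =>
      have hn : s ^ n * t ∈ ball (0 : ℂ) r := mem_ball_zero_iff.mpr ((hmono t hmn).trans_lt hm)
      rw [← ih]
      simp only [W, Function.iterate_succ_apply, pow_succ', mul_assoc, hψg _ hn]
  set Ψ : ℂ → E := fun t => limUnder atTop fun m => W m t
  have hΨ : ∀ {m : ℕ} {t : ℂ}, ‖s ^ m * t‖ < r → Ψ t = W m t := fun {m t} hm =>
    (tendsto_atTop_of_eventually_const (hstable hm)).limUnder_eq
  refine ⟨Ψ, fun t₀ => ?_, fun t ht => by simpa [W] using hΨ (m := 0) (by simpa using ht),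
    fun t => ?_⟩
  · obtain ⟨m, hm⟩ := hsmall (‖t₀‖ + 1)
    have hnear : ∀ t ∈ ball t₀ 1, ‖s ^ m * t‖ < r := fun t ht => by
      rw [norm_mul, norm_pow]
      refine lt_of_le_of_lt ?_ hm
      gcongr
      linarith [norm_le_norm_add_norm_sub' t t₀, (mem_ball_iff_norm.mp ht).le]
    have hψt : DifferentiableAt ℂ ψ (s ^ m * t₀) := hψ.differentiableAt
      (isOpen_ball.mem_nhds (mem_ball_zero_iff.mpr (hnear t₀ (mem_ball_self one_pos))))
    refine (((hg.iterate m) _).comp t₀ (hψt.comp t₀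
      (differentiableAt_id.const_mul _))).congr_of_eventuallyEq ?_
    filter_upwards [ball_mem_nhds t₀ one_pos] with t ht using hΨ (hnear t ht)
  · obtain ⟨m, hm⟩ := hsmall ‖t‖
    have hm' : ‖s ^ m * t‖ < r := by rwa [norm_mul, norm_pow]
    have hm1 : ‖s ^ (m + 1) * t‖ < r := (hmono t m.le_succ).trans_lt hm'
    have hms : ‖s ^ m * (s * t)‖ < r := by rwa [← mul_assoc, ← pow_succ]
    rw [hΨ hms, hΨ hm1]
    simp only [W, Function.iterate_succ_apply', pow_succ, mul_assoc]

end InvariantCurve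

section StableCurve

theorem exists_continuousLinearEquiv_diag {A : ℂ × ℂ →L[ℂ] ℂ × ℂ} {a b : ℂ} (hab : a ≠ b)
    {v w : ℂ × ℂ} (hv0 : v ≠ 0) (hw0 : w ≠ 0) (hv : A v = a • v) (hw : A w = b • w) :
    ∃ T : (ℂ × ℂ) ≃L[ℂ] ℂ × ℂ, T (1, 0) = v ∧ ∀ z, A (T z) = T (a * z.1, b * z.2) := by
  set T₀ : ℂ × ℂ →ₗ[ℂ] ℂ × ℂ :=
    (LinearMap.fst ℂ ℂ ℂ).smulRight v + (LinearMap.snd ℂ ℂ ℂ).smulRight w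
  have hT₀ : ∀ z, T₀ z = z.1 • v + z.2 • w := fun z => rfl
  have hinj : Function.Injective T₀ := by
    rw [← LinearMap.ker_eq_bot, LinearMap.ker_eq_bot']
    intro z hz
    rw [hT₀] at hz
    have hA : (z.1 * a) • v + (z.2 * b) • w = 0 := by
      simpa [hv, hw, smul_smul] using congrArg A hz
    have h2 : (z.2 * (b - a)) • w = 0 := by
      linear_combination (norm := module) hA - a • hz
    have hz2 : z.2 = 0 := by simpa [hw0, sub_eq_zero, hab.symm] using h2
    have hz1 : z.1 = 0 := by simpa [hz2, hv0] using hz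
    exact Prod.ext hz1 hz2
  set T := (LinearEquiv.ofInjectiveEndo T₀ hinj).toContinuousLinearEquiv
  have hT : ∀ z, T z = z.1 • v + z.2 • w := hT₀
  refine ⟨T, by simp [hT], fun z => ?_⟩
  simp only [hT, map_add, map_smul, hv, hw, smul_smul, mul_comm]

theorem exists_local_unstable_curve {g : ℂ × ℂ → ℂ × ℂ} (hg : ∀ x, AnalyticAt ℂ g x)
    {p₀ : ℂ × ℂ} (hp₀ : g p₀ = p₀) {Lg : ℂ × ℂ →L[ℂ] ℂ × ℂ} (hLg : HasFDerivAt g Lg p₀)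
    {s u : ℂ} (hs0 : s ≠ 0) (hs : ‖s‖ < 1) (hu : 1 < ‖u‖) {v w : ℂ × ℂ} (hv0 : v ≠ 0)
    (hw0 : w ≠ 0) (hv : Lg v = s⁻¹ • v) (hw : Lg w = u⁻¹ • w) :
    ∃ r > 0, ∃ ψ : ℂ → ℂ × ℂ, DifferentiableOn ℂ ψ (ball 0 r) ∧ ψ 0 = p₀ ∧
      HasDerivAt ψ v 0 ∧ ∀ t ∈ ball (0 : ℂ) r, g (ψ (s * t)) = ψ t := by
  have hsu : ‖u⁻¹‖ ≤ ‖s⁻¹‖ := by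
    rw [norm_inv, norm_inv]
    exact inv_anti₀ (norm_pos_iff.mpr hs0) (hs.trans hu).le
  have hsu' : s⁻¹ ≠ u⁻¹ := fun h => by
    rw [inv_inj.mp h] at hs
    linarith
  -- In the eigenbasis the derivative is `diag(s⁻¹, u⁻¹)`, of sup-norm `‖s‖⁻¹`; in the original
  -- coordinates `‖Lg‖ * ‖s‖ ^ 2 < 1` may fail.
  obtain ⟨T, hT1, hT⟩ := exists_continuousLinearEquiv_diag hsu' hv0 hw0 hv hw
  set G : ℂ × ℂ → ℂ × ℂ := fun z => T.symm (g (p₀ + T z) - p₀)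
  set Λ : ℂ × ℂ →L[ℂ] ℂ × ℂ :=
    (T.symm : ℂ × ℂ →L[ℂ] ℂ × ℂ) ∘L Lg ∘L (T : ℂ × ℂ →L[ℂ] ℂ × ℂ)
  have hΛ : ∀ z, Λ z = (s⁻¹ * z.1, u⁻¹ * z.2) := fun z => by simp [Λ, hT]
  have hGa : ∀ z, AnalyticAt ℂ G z := fun z =>
    T.symm.analyticAt _ |>.comp (((hg _).comp (analyticAt_const.add (T.analyticAt z))).sub
      analyticAt_const)
  have hGΛ : HasFDerivAt G Λ 0 := by
    have hLg' : HasFDerivAt g Lg (p₀ + T 0) := by simpa using hLg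
    exact T.symm.hasFDerivAt.comp 0 ((hLg'.comp 0 (T.hasFDerivAt.const_add p₀)).sub_const p₀)
  have hΛnorm : ‖Λ‖ * ‖s‖ ^ 2 < 1 := by
    have hle : ‖Λ‖ ≤ ‖s⁻¹‖ := Λ.opNorm_le_bound (norm_nonneg _) fun z => by
      rw [hΛ, Prod.norm_def, norm_mul, norm_mul]
      exact max_le (by gcongr; exact norm_fst_le z)
        (mul_le_mul hsu (norm_snd_le z) (norm_nonneg _) (norm_nonneg _))
    calc ‖Λ‖ * ‖s‖ ^ 2 ≤ ‖s⁻¹‖ * ‖s‖ ^ 2 := by gcongr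
      _ = ‖s‖ := by
          rw [norm_inv, sq, ← mul_assoc, inv_mul_cancel₀ (norm_ne_zero_iff.mpr hs0), one_mul]
      _ < 1 := hs
  obtain ⟨r, hr, ζ, hζd, hζ0, hζ', hζG⟩ := exists_invariantCurve
    (fun z => (hGa z).differentiableAt) (hGa 0) hGΛ (by simp [G, hp₀]) hs0 hs hΛnorm
    (e := (1, 0)) (by simp [hΛ])
  refine ⟨r, hr, fun t => p₀ + T (ζ t), ?_, by simp [hζ0], ?_, fun t ht => ?_⟩
  · exact (T.differentiable.comp_differentiableOn hζd).const_add p₀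
  · simpa [hT1] using (T.hasFDerivAt.comp_hasDerivAt 0 hζ').const_add p₀
  · simpa [G] using congrArg (fun z => p₀ + T z) (hζG t ht)

theorem exists_entire_stable_curve (f : Equiv.Perm (ℂ × ℂ)) (hf : ∀ x, AnalyticAt ℂ f.symm x)
    {p₀ : ℂ × ℂ} (hfix : f p₀ = p₀) {Lf : ℂ × ℂ →L[ℂ] ℂ × ℂ} (hLf : HasFDerivAt f Lf p₀)
    {s u : ℂ} (hs : ‖s‖ < 1) (hu : 1 < ‖u‖) {v w : ℂ × ℂ} (hv0 : v ≠ 0) (hw0 : w ≠ 0)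
    (hv : Lf v = s • v) (hw : Lf w = u • w) :
    ∃ Ψ : ℂ → ℂ × ℂ, Differentiable ℂ Ψ ∧ Ψ 0 = p₀ ∧ HasDerivAt Ψ v 0 ∧
      Function.Semiconj Ψ (s * ·) f := by
  have hfix' : f.symm p₀ = p₀ := f.symm_apply_eq.mpr hfix.symm
  set Lg := fderiv ℂ f.symm p₀
  have hLg : HasFDerivAt f.symm Lg p₀ := (hf p₀).differentiableAt.hasFDerivAt
  have hLgLf : ∀ z, Lg (Lf z) = z := by
    have hcomp : HasFDerivAt (f.symm ∘ f) (Lg ∘L Lf) p₀ := (hfix ▸ hLg).comp p₀ hLf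
    rw [f.symm_comp_self] at hcomp
    exact fun z => congrArg (· z) (hcomp.unique (hasFDerivAt_id p₀))
  have hinv : ∀ {c : ℂ} {x : ℂ × ℂ}, Lf x = c • x → c ≠ 0 → Lg x = c⁻¹ • x :=
    fun {c x} hx hc =>
      calc Lg x = c⁻¹ • Lg (c • x) := by rw [map_smul, inv_smul_smul₀ hc]
        _ = c⁻¹ • x := by rw [← hx, hLgLf]
  have hs0 : s ≠ 0 := fun h => hv0 (by rw [← hLgLf v, hv, h, zero_smul, map_zero])
  have hu0 : u ≠ 0 := norm_pos_iff.mp (one_pos.trans hu)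
  obtain ⟨r, hr, ψ, hψd, hψ0, hψ', hψg⟩ := exists_local_unstable_curve hf hfix' hLg hs0 hs hu
    hv0 hw0 (hinv hv hs0) (hinv hw hu0)
  obtain ⟨Ψ, hΨd, hΨψ, hΨg⟩ :=
    exists_entire_extension (fun x => (hf x).differentiableAt) hs hr hψd hψg
  refine ⟨Ψ, hΨd, (hΨψ (mem_ball_self hr)).trans hψ0,
    hψ'.congr_of_eventuallyEq (eventually_of_mem (ball_mem_nhds 0 hr) hΨψ), fun t => ?_⟩
  rw [← hΨg t, f.apply_symm_apply]

theorem Function.Semiconj.tendsto_iterate {X : Type*} [TopologicalSpace X] {Ψ : ℂ → X}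
    {f : X → X} {s : ℂ} (hΨf : Function.Semiconj Ψ (s * ·) f) (hΨ : Continuous Ψ)
    (hs : ‖s‖ < 1) (t : ℂ) : Tendsto (fun n => f^[n] (Ψ t)) atTop (𝓝 (Ψ 0)) := by
  simp only [← (hΨf.iterate_right _).eq, mul_left_iterate]
  exact hΨ.continuousAt.tendsto.comp
    (by simpa using (tendsto_pow_atTop_nhds_zero_of_norm_lt_one hs).mul_const t)

theorem Differentiable.exists_lt_norm_of_hasDerivAt {E : Type*} [NormedAddCommGroup E]
    [NormedSpace ℂ E] {Ψ : ℂ → E} (hΨ : Differentiable ℂ Ψ) {t₀ : ℂ} {v : E}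
    (hv : HasDerivAt Ψ v t₀) (hv0 : v ≠ 0) (B : ℝ) : ∃ t, B < ‖Ψ t‖ := by
  by_contra! hB
  obtain ⟨c, hc⟩ := hΨ.exists_const_forall_eq_of_bounded
    (isBounded_iff_forall_norm_le.mpr ⟨B, forall_mem_range.mpr hB⟩)
  obtain rfl : Ψ = fun _ => c := funext hc
  exact hv0 (hv.unique (hasDerivAt_const t₀ c))

end StableCurve

/-- Proposition 1.4. The stable manifold of a saddle fixed point of a
composition of generalized Hénon maps is not contained in the set `K⁻` of points with bounded
backward orbits. -/
theorem statement12 (f : Equiv.Perm (ℂ × ℂ))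
    (L : List ((ℂ × ℂ) → ℂ × ℂ)) (hL : L ≠ []) (hLhen : ∀ h ∈ L, IsGenHenon h)
    (hf : ⇑f = L.foldr (· ∘ ·) id)
    (p₀ : ℂ × ℂ) (hfix : f p₀ = p₀)
    (M : Matrix (Fin 2) (Fin 2) ℂ) (hM : HasJacMatrix (⇑f) p₀ M)
    (u s : ℂ) (htr : u + s = M.trace) (hdet : u * s = M.det)
    (hu : 1 < ‖u‖) (hs : ‖s‖ < 1) :
    ∃ q : ℂ × ℂ, Filter.Tendsto (fun n : ℕ => (f ^ n) q) Filter.atTop (nhds p₀) ∧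
      ¬ ∃ R : ℝ, ∀ n : ℕ, ‖(f⁻¹ ^ n) q‖ ≤ R := by
  obtain ⟨R₀, hR₀⟩ := exists_escapes_foldr hL hLhen
  have hesc : Escapes f (max R₀ 1) := hf ▸ hR₀ _ (le_max_left _ _)
  have hR : 0 < max R₀ 1 := lt_max_of_lt_right one_pos
  obtain ⟨g, hg, hgf⟩ := exists_analytic_leftInverse_foldr hLhen
  have hsymm : ⇑f.symm = g :=
    funext fun x => by rw [← hgf (f.symm x), ← hf, f.apply_symm_apply]
  obtain ⟨v, hv0, hv⟩ := M.exists_toCLMProd_eq_smul (c := s) (by linear_combination s * htr - hdet)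
  obtain ⟨w, hw0, hw⟩ := M.exists_toCLMProd_eq_smul (c := u) (by linear_combination u * htr - hdet)
  obtain ⟨Ψ, hΨd, hΨ0, hΨv, hΨf⟩ :=
    exists_entire_stable_curve f (hsymm ▸ hg) hfix hM.hasFDerivAt hs hu hv0 hw0 hv hw
  obtain ⟨t₀, ht₀⟩ := hΨd.exists_lt_norm_of_hasDerivAt hΨv hv0 (max R₀ 1)
  have hconv : Tendsto (fun n : ℕ => (f ^ n) (Ψ t₀)) atTop (𝓝 p₀) := by
    simpa only [Equiv.Perm.coe_pow, hΨ0] using hΨf.tendsto_iterate hΨd.continuous hs t₀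
  refine ⟨Ψ t₀, hconv, fun ⟨B, hB⟩ => ?_⟩
  rcases mem_vPlus_or_mem_vMinus ht₀.le with hq | hq
  · obtain ⟨B', hB'⟩ := hconv.norm.bddAbove_range
    obtain ⟨n, hn⟩ := hesc.exists_lt_norm_iterate hR hq B'
    exact hn.not_ge (hB' ⟨n, by simp only [Equiv.Perm.coe_pow]⟩)
  · obtain ⟨n, hn⟩ := hesc.exists_lt_norm_iterate_of_rightInverse hR f.apply_symm_apply hq B
    exact hn.not_ge (by simpa only [Equiv.Perm.coe_pow, Equiv.Perm.coe_inv] using hB n)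
end

section
/- Fix an integer d ≥ 1 and a compact set K ⊆ ℂ². For each m ∈ ℕ let F_m ⊆ K be a nonempty finite set which is contained in the zero locus of some nonzero polynomial P_m ∈ ℂ[x,y] of total degree at most d, and let μ_m be the uniform probability measure on F_m. If some subsequence of (μ_m) converges weakly to a probability measure μ on ℂ², then μ is supported on the zero locus of some nonzero polynomial of total degree at most d. -/
/-!
Normalise the coefficient vectors of the `P m` in the monomial basis of polynomials of total
degree `≤ d` and extract a convergent subsequence; its limit `Q` has norm one, so `Q ≠ 0`. On the
compact set `K` evaluation is uniformly Lipschitz in the coefficients, hence `min 1 ‖Q‖` is at most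
`C * ‖Q - Pₖ / ‖Pₖ‖‖` on `F k`, where `Pₖ` vanishes. The averages of this bounded continuous
function over `F k` thus tend to `0`, so its integral against the weak limit `μ` vanishes and
`Q = 0` holds `μ`-almost everywhere.
-/

open MvPolynomial MeasureTheory Filter Topology BoundedContinuousFunction

section WeakLimit

variable {X : Type*} [TopologicalSpace X] [MeasurableSpace X] [OpensMeasurableSpace X]
  {μ : Measure X} [IsFiniteMeasure μ] {F : ℕ → Finset X}

theorem ae_eq_zero_of_tendsto_average_of_norm_le {E : Type*} [NormedAddCommGroup E]
    {u : X → E} (hu : Continuous u)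
    (hconv : ∀ h : X →ᵇ ℝ,
      Tendsto (fun k => (∑ p ∈ F k, h p) / ((F k).card : ℝ)) atTop (𝓝 (∫ p, h p ∂μ)))
    {ε : ℕ → ℝ} (hε0 : ∀ k, 0 ≤ ε k) (hε : Tendsto ε atTop (𝓝 0))
    (huε : ∀ k, ∀ p ∈ F k, ‖u p‖ ≤ ε k) :
    u =ᵐ[μ] 0 := by
  have hg01 : ∀ p, min 1 ‖u p‖ ∈ Set.Icc 0 1 := fun p =>
    ⟨le_min zero_le_one (norm_nonneg _), min_le_left _ _⟩
  let g : X →ᵇ ℝ := .mkOfBound ⟨fun p => min 1 ‖u p‖, by fun_prop⟩ 1 fun p q =>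
    Real.dist_le_of_mem_Icc_01 (hg01 p) (hg01 q)
  have hint : ∫ p, g p ∂μ = 0 := by
    refine tendsto_nhds_unique (hconv g) <|
      tendsto_of_tendsto_of_tendsto_of_le_of_le tendsto_const_nhds hε (fun k => ?_) fun k => ?_
    · exact div_nonneg (Finset.sum_nonneg fun p _ => (hg01 p).1) (Nat.cast_nonneg _)
    · refine div_le_of_le_mul₀ (Nat.cast_nonneg _) (hε0 k) ?_
      rw [mul_comm, ← nsmul_eq_mul]
      exact Finset.sum_le_card_nsmul _ _ _ fun p hp => (min_le_right _ _).trans (huε k p hp)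
  filter_upwards [(integral_eq_zero_iff_of_nonneg (fun p => (hg01 p).1) (g.integrable μ)).mp hint]
    with p hp
  rcases min_eq_iff.mp (hp : min 1 ‖u p‖ = 0) with ⟨h10, -⟩ | ⟨hu0, -⟩
  · exact absurd h10 one_ne_zero
  · exact norm_eq_zero.mp hu0

end WeakLimit

section LinearCombination

variable {X ι : Type*} [TopologicalSpace X] [Fintype ι] {f : ι → X → ℂ}

theorem continuous_linearCombination (hf : ∀ i, Continuous (f i)) (w : ι → ℂ) :
    Continuous (Fintype.linearCombination ℂ f w) := by
  rw [Fintype.linearCombination_apply, Finset.sum_fn]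
  exact continuous_finsetSum _ fun i _ => (hf i).const_smul (w i)

theorem exists_bound_linearCombination_of_isCompact (hf : ∀ i, Continuous (f i)) {K : Set X}
    (hK : IsCompact K) :
    ∃ C, 0 ≤ C ∧ ∀ w : ι → ℂ, ∀ p ∈ K, ‖Fintype.linearCombination ℂ f w p‖ ≤ C * ‖w‖ := by
  choose C hC using fun i => hK.exists_bound_of_continuousOn (hf i).continuousOn
  refine ⟨∑ i, max (C i) 0, by positivity, fun w p hp => ?_⟩
  calc ‖Fintype.linearCombination ℂ f w p‖ = ‖∑ i, w i * f i p‖ := by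
        simp [Fintype.linearCombination_apply]
    _ ≤ ∑ i, ‖w‖ * max (C i) 0 := by
        refine norm_sum_le_of_le _ fun i _ => ?_
        rw [norm_mul]
        gcongr
        exacts [norm_le_pi_norm w i, le_max_of_le_left (hC i p hp)]
    _ = (∑ i, max (C i) 0) * ‖w‖ := by rw [← Finset.mul_sum, mul_comm]

variable [MeasurableSpace X] [OpensMeasurableSpace X] {μ : Measure X} [IsFiniteMeasure μ]
  {F : ℕ → Finset X}

theorem exists_ne_zero_linearCombination_ae_eq_zero (hf : ∀ i, Continuous (f i)) {K : Set X}
    (hK : IsCompact K) (hFK : ∀ m, ↑(F m) ⊆ K) {w : ℕ → ι → ℂ} (hw : ∀ m, w m ≠ 0)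
    (hwF : ∀ m, ∀ p ∈ F m, Fintype.linearCombination ℂ f (w m) p = 0)
    (hconv : ∀ h : X →ᵇ ℝ,
      Tendsto (fun k => (∑ p ∈ F k, h p) / ((F k).card : ℝ)) atTop (𝓝 (∫ p, h p ∂μ))) :
    ∃ v ≠ 0, Fintype.linearCombination ℂ f v =ᵐ[μ] 0 := by
  set v : ℕ → ι → ℂ := fun m => (‖w m‖⁻¹ : ℂ) • w m
  have hv : ∀ m, v m ∈ Metric.sphere 0 1 := fun m =>
    mem_sphere_zero_iff_norm.mpr (norm_smul_inv_norm (hw m))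
  have hvF : ∀ m, ∀ p ∈ F m, Fintype.linearCombination ℂ f (v m) p = 0 := fun m p hp => by
    simp [v, hwF m p hp]
  obtain ⟨ℓ, hℓ, ψ, hψ, hlim⟩ := (isCompact_sphere (0 : ι → ℂ) 1).tendsto_subseq hv
  obtain ⟨C, hC0, hC⟩ := exists_bound_linearCombination_of_isCompact hf hK
  refine ⟨ℓ, ne_zero_of_mem_unit_sphere ⟨ℓ, hℓ⟩,
    ae_eq_zero_of_tendsto_average_of_norm_le (F := F ∘ ψ) (continuous_linearCombination hf ℓ)
      (fun h => (hconv h).comp hψ.tendsto_atTop) (ε := fun k => C * ‖ℓ - v (ψ k)‖)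
      (fun k => by positivity) ?_ fun k p hp => ?_⟩
  · simpa using (((tendsto_const_nhds (x := ℓ)).sub hlim).norm.const_mul C)
  · calc ‖Fintype.linearCombination ℂ f ℓ p‖
          = ‖Fintype.linearCombination ℂ f (ℓ - v (ψ k)) p‖ := by
            rw [map_sub, Pi.sub_apply, hvF _ p hp, sub_zero]
      _ ≤ C * ‖ℓ - v (ψ k)‖ := hC _ p (hFK _ hp)

end LinearCombination

noncomputable instance {σ : Type*} [Finite σ] (d : ℕ) :
    Fintype {n : σ →₀ ℕ | (n.sum fun _ e => e) ≤ d} :=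
  (Finsupp.finite_of_degree_le d).fintype

theorem exists_ne_zero_totalDegree_le_ae_eval_eq_zero {σ X : Type*} [Finite σ]
    [TopologicalSpace X] [MeasurableSpace X] [OpensMeasurableSpace X] {x : X → σ → ℂ}
    (hx : Continuous x)
    {K : Set X} (hK : IsCompact K) {F : ℕ → Finset X} (hFK : ∀ m, ↑(F m) ⊆ K) {d : ℕ}
    {P : ℕ → MvPolynomial σ ℂ} (hP0 : ∀ m, P m ≠ 0) (hPd : ∀ m, (P m).totalDegree ≤ d)
    (hPF : ∀ m, ∀ p ∈ F m, eval (x p) (P m) = 0) {μ : Measure X} [IsFiniteMeasure μ]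
    (hconv : ∀ h : X →ᵇ ℝ,
      Tendsto (fun k => (∑ p ∈ F k, h p) / ((F k).card : ℝ)) atTop (𝓝 (∫ p, h p ∂μ))) :
    ∃ Q : MvPolynomial σ ℂ, Q ≠ 0 ∧ Q.totalDegree ≤ d ∧ ∀ᵐ p ∂μ, eval (x p) Q = 0 := by
  let b : Module.Basis _ ℂ (restrictTotalDegree σ ℂ d) := basisRestrictSupport ℂ _
  let f := fun i p => eval (x p) (b i : MvPolynomial σ ℂ)
  have hf : ∀ q p, Fintype.linearCombination ℂ f (b.equivFun q) p = eval (x p) q := fun q p => by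
    conv_rhs => rw [← b.sum_equivFun q]
    simp only [Fintype.linearCombination_apply, Finset.sum_apply, Pi.smul_apply, smul_eq_mul,
      Submodule.coe_sum, Submodule.coe_smul, map_sum, smul_eval, f]
  let Pd : ℕ → restrictTotalDegree σ ℂ d := fun m =>
    ⟨P m, (mem_restrictTotalDegree σ d _).mpr (hPd m)⟩
  obtain ⟨v, hv0, hv⟩ := exists_ne_zero_linearCombination_ae_eq_zero
    (fun i => (continuous_eval _).comp hx) hK hFK (w := fun m => b.equivFun (Pd m))
    (fun m => by simpa [Pd] using hP0 m) (fun m p hp => (hf _ p).trans (hPF m p hp)) hconv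
  refine ⟨b.equivFun.symm v,
    Submodule.coe_eq_zero.not.mpr (b.equivFun.symm.map_ne_zero_iff.mpr hv0),
    (mem_restrictTotalDegree σ d _).mp (b.equivFun.symm v).2, ?_⟩
  filter_upwards [hv] with p hp
  rw [← hf, b.equivFun.apply_symm_apply]
  exact hp

theorem statement15_general (d : ℕ) (K : Set (ℂ × ℂ)) (hK : IsCompact K)
    (F : ℕ → Finset (ℂ × ℂ)) (hFK : ∀ m, ↑(F m) ⊆ K)
    (P : ℕ → MvPolynomial (Fin 2) ℂ) (hP0 : ∀ m, P m ≠ 0)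
    (hPd : ∀ m, (P m).totalDegree ≤ d)
    (hPF : ∀ m, ∀ p ∈ F m, eval ![p.1, p.2] (P m) = 0)
    (μ : MeasureTheory.Measure (ℂ × ℂ)) [MeasureTheory.IsProbabilityMeasure μ]
    (φ : ℕ → ℕ)
    (hconv : ∀ h : BoundedContinuousFunction (ℂ × ℂ) ℝ,
      Filter.Tendsto (fun k => (∑ p ∈ F (φ k), h p) / ((F (φ k)).card : ℝ))
        Filter.atTop (nhds (∫ p, h p ∂μ))) :
    ∃ Q : MvPolynomial (Fin 2) ℂ, Q ≠ 0 ∧ Q.totalDegree ≤ d ∧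
      μ {p : ℂ × ℂ | eval ![p.1, p.2] Q ≠ 0} = 0 := by
  obtain ⟨Q, hQ0, hQd, hQ⟩ := exists_ne_zero_totalDegree_le_ae_eval_eq_zero
    (x := fun p : ℂ × ℂ => ![p.1, p.2]) (by fun_prop) hK (fun k => hFK (φ k))
    (fun k => hP0 (φ k)) (fun k => hPd (φ k)) (fun k => hPF (φ k)) hconv
  exact ⟨Q, hQ0, hQd, ae_iff.mp hQ⟩

/-- Lemma 3.4. Weak limits of uniform measures on finite subsets of a fixed
compact set, each lying on a curve of degree at most `d`, are supported on a curve of degree at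
most `d`. -/
theorem statement15 (d : ℕ) (hd : 1 ≤ d) (K : Set (ℂ × ℂ)) (hK : IsCompact K)
    (F : ℕ → Finset (ℂ × ℂ)) (hFne : ∀ m, (F m).Nonempty) (hFK : ∀ m, ↑(F m) ⊆ K)
    (P : ℕ → MvPolynomial (Fin 2) ℂ) (hP0 : ∀ m, P m ≠ 0)
    (hPd : ∀ m, (P m).totalDegree ≤ d)
    (hPF : ∀ m, ∀ p ∈ F m, eval ![p.1, p.2] (P m) = 0)
    (μ : MeasureTheory.Measure (ℂ × ℂ)) [MeasureTheory.IsProbabilityMeasure μ]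
    (φ : ℕ → ℕ) (hφ : StrictMono φ)
    (hconv : ∀ h : BoundedContinuousFunction (ℂ × ℂ) ℝ,
      Filter.Tendsto (fun k => (∑ p ∈ F (φ k), h p) / ((F (φ k)).card : ℝ))
        Filter.atTop (nhds (∫ p, h p ∂μ))) :
    ∃ Q : MvPolynomial (Fin 2) ℂ, Q ≠ 0 ∧ Q.totalDegree ≤ d ∧
      μ {p : ℂ × ℂ | eval ![p.1, p.2] Q ≠ 0} = 0 :=
  statement15_general d K hK F hFK P hP0 hPd hPF μ φ hconv
end

section
/- Let f : Y → S be a finite morphism of schemes which is locally of finite presentation, and let σ : S → Y be a section of f (a morphism with f ∘ σ = id_S). Suppose that for every point s ∈ S the local ring of the scheme-theoretic fiber f^{-1}(s) = Y ×_S Spec κ(s) at the point corresponding to σ(s) is equal to the residue field κ(s), i.e., the canonical map κ(s) → 𝒪_{f^{-1}(s), σ(s)} is an isomorphism. Then the image σ(S) is an open subset of the underlying topological space of Y. -/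
open AlgebraicGeometry CategoryTheory

/-!
Over an affine open `U ∋ s` with affine preimage `V = f⁻¹ U`, the section gives a retraction
`ψ : Γ(Y, V) → Γ(S, U)` of the finite ring map `Γ(S, U) → Γ(Y, V)`; its kernel `I` is therefore a
finitely generated ideal, and `σ(U)` is the closed subset `V(I)` of `V`. The stalk of `I` at `σ s`
is the kernel `K` of `A = 𝒪_{Y,σ s} → 𝒪_{S,s}`. With `R = 𝒪_{S,s}` we have `A = R + K`, and the
fiber hypothesis says `A = R + 𝔪_R A`; together these give `K ⊆ 𝔪_A K`, so `K = 0` by Nakayama.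
Thus `σ s` lies outside the closed support of `I`, whose complement is an open neighbourhood of
`σ s` inside `V(I) ⊆ σ(S)`.
-/

theorem RingHom.ker_fg_of_finite_of_leftInverse {R A : Type*} [CommRing R] [CommRing A]
    {φ : R →+* A} (hφ : φ.Finite) {ψ : A →+* R} (hψφ : Function.LeftInverse ψ φ) :
    (RingHom.ker ψ).FG := by
  let := φ.toAlgebra
  have : Module.Finite R A := hφ
  let ψₐ : A →ₐ[R] R := { ψ with commutes' := hψφ }
  have hker : (RingHom.ker ψ).restrictScalars R =
      LinearMap.range (LinearMap.id - Algebra.linearMap R A ∘ₗ ψₐ.toLinearMap) := by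
    ext a
    refine ⟨fun ha => ⟨a, ?_⟩, ?_⟩
    · simp [ψₐ, RingHom.mem_ker.mp ha]
    · rintro ⟨b, rfl⟩
      simp [ψₐ, RingHom.mem_ker, RingHom.algebraMap_toAlgebra, hψφ (ψ b)]
  refine Submodule.FG.of_restrictScalars R ?_
  rw [hker, LinearMap.range_eq_map]
  exact (Module.Finite.fg_top).map _

theorem Ideal.compl_support_subset_zeroLocus {A : Type*} [CommRing A] (I : Ideal A) :
    (Module.support A I)ᶜ ⊆ PrimeSpectrum.zeroLocus I := by
  intro p hp t ht
  obtain ⟨r, hr, hrt⟩ := Module.notMem_support_iff'.mp hp ⟨t, ht⟩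
  have : r * t ∈ p.asIdeal := by
    rw [show r * t = 0 from congrArg Subtype.val hrt]
    exact p.asIdeal.zero_mem
  exact (p.isPrime.mem_or_mem this).resolve_left hr

theorem IsLocalization.ker_eq_map_ker_of_comp_algebraMap {A R Aₘ Rₙ : Type*} [CommRing A]
    [CommRing R] [CommRing Aₘ] [CommRing Rₙ] {M : Submonoid A} {N : Submonoid R}
    [Algebra A Aₘ] [IsLocalization M Aₘ] [Algebra R Rₙ] [IsLocalization N Rₙ]
    {ψ : A →+* R} (hMN : M.map ψ = N) {Ψ : Aₘ →+* Rₙ}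
    (hΨ : Ψ.comp (algebraMap A Aₘ) = (algebraMap R Rₙ).comp ψ) :
    RingHom.ker Ψ = (RingHom.ker ψ).map (algebraMap A Aₘ) := by
  obtain rfl : Ψ = IsLocalization.map Rₙ ψ (hMN.symm ▸ M.le_comap_map) :=
    IsLocalization.ringHom_ext M (by rw [hΨ, IsLocalization.map_comp])
  exact IsLocalization.ker_map Rₙ ψ hMN

namespace IsLocalRing

variable {R A R' : Type*} [CommRing R] [IsLocalRing R] [CommRing A] [IsLocalRing A]
  [CommRing R']

theorem ker_eq_bot_of_quotientMap_surjective (Φ : R →+* A) [IsLocalHom Φ] (Ψ : A →+* R')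
    (hΨΦ : Function.Bijective (Ψ.comp Φ)) (hfg : (RingHom.ker Ψ).FG)
    (hfib : Function.Surjective
      (Ideal.quotientMap ((maximalIdeal R).map Φ) Φ Ideal.le_comap_map)) :
    RingHom.ker Ψ = ⊥ := by
  set K := RingHom.ker Ψ
  have hsplit : ∀ a, ∃ r, a - Φ r ∈ K := fun a => by
    obtain ⟨r, hr⟩ := hΨΦ.2 (Ψ a)
    exact ⟨r, by simp [K, RingHom.mem_ker, ← hr]⟩
  have hfiber : ∀ a, ∃ r, a - Φ r ∈ (maximalIdeal R).map Φ := fun a => by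
    obtain ⟨x, hx⟩ := hfib (Ideal.Quotient.mk _ a)
    obtain ⟨r, rfl⟩ := Ideal.Quotient.mk_surjective x
    exact ⟨r, Ideal.Quotient.eq.mp (by rw [← hx, Ideal.quotientMap_mk])⟩
  -- `Φ(𝔪) A = Φ(𝔪) (Φ(R) + K) ⊆ Φ(𝔪) + 𝔪_A K`, as `Φ` is local
  have hdecomp : ∀ n ∈ (maximalIdeal R).map Φ,
      ∃ r ∈ maximalIdeal R, n - Φ r ∈ maximalIdeal A * K := by
    intro n hn
    refine Submodule.span_induction ?_ ⟨0, zero_mem _, by simp⟩ ?_ ?_ hn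
    · rintro _ ⟨r, hr, rfl⟩
      exact ⟨r, hr, by simp⟩
    · rintro x y - - ⟨r₁, hr₁, hx⟩ ⟨r₂, hr₂, hy⟩
      refine ⟨r₁ + r₂, add_mem hr₁ hr₂, ?_⟩
      convert add_mem hx hy using 1
      rw [map_add]; ring
    · rintro c x - ⟨r, hr, hx⟩
      obtain ⟨r₀, hr₀⟩ := hsplit c
      refine ⟨r₀ * r, Ideal.mul_mem_left _ r₀ hr, ?_⟩
      have : c • x - Φ (r₀ * r) = c * (x - Φ r) + Φ r * (c - Φ r₀) := by
        rw [map_mul, smul_eq_mul]; ring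
      rw [this]
      exact add_mem (Ideal.mul_mem_left _ c hx) (Ideal.mul_mem_mul (map_nonunit Φ r hr) hr₀)
  have hle : K ≤ maximalIdeal A • K := by
    intro k hk
    obtain ⟨r, hr⟩ := hfiber k
    obtain ⟨r', -, hr'⟩ := hdecomp _ hr
    have hrest : k - Φ (r + r') ∈ maximalIdeal A * K := by
      rw [map_add, ← sub_sub]; exact hr'
    have hzero : r + r' = 0 := hΨΦ.1 <| by
      have h : Ψ (k - Φ (r + r')) = 0 := Ideal.mul_le_right hrest
      rwa [map_sub, RingHom.mem_ker.mp hk, zero_sub, neg_eq_zero, ← map_zero (Ψ.comp Φ)] at h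
    rwa [hzero, map_zero, sub_zero] at hrest
  exact Submodule.eq_bot_of_le_smul_of_le_jacobson_bot _ _ hfg hle
    (maximalIdeal_le_jacobson _)

end IsLocalRing

namespace AlgebraicGeometry

lemma Scheme.Hom.stalkMap_germ_apply_eq_germ_appLE {Y S : Scheme} (σ : S ⟶ Y) (V : Y.Opens)
    (U : S.Opens) (e : U ≤ σ ⁻¹ᵁ V) (s : S) (hs : s ∈ U) (b : Γ(Y, V)) :
    σ.stalkMap s (Y.presheaf.germ V (σ.base s) (e hs) b) =
      S.presheaf.germ U s hs (σ.appLE V U e b) :=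
  (Scheme.Hom.germ_stalkMap_apply σ V s (e hs) b).trans
    (S.presheaf.germ_res_apply (homOfLE e) s hs _).symm

variable {Y S : Scheme} {f : Y ⟶ S} {σ : S ⟶ Y}

lemma Scheme.Hom.apply_apply_of_comp_eq_id (hσ : σ ≫ f = 𝟙 S) (s : S) :
    f.base (σ.base s) = s := by
  rw [← Scheme.Hom.comp_apply, hσ]
  rfl

lemma Scheme.Hom.le_preimage_preimage_of_comp_eq_id (hσ : σ ≫ f = 𝟙 S) (U : S.Opens) :
    U ≤ σ ⁻¹ᵁ f ⁻¹ᵁ U := fun s hs =>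
  show f.base (σ.base s) ∈ U from (apply_apply_of_comp_eq_id hσ s).symm ▸ hs

lemma Scheme.Hom.leftInverse_appLE_app_of_comp_eq_id (hσ : σ ≫ f = 𝟙 S) (U : S.Opens) :
    Function.LeftInverse (σ.appLE (f ⁻¹ᵁ U) U (le_preimage_preimage_of_comp_eq_id hσ U))
      (f.app U) := by
  have hid : ∀ (g : S ⟶ S) (e : U ≤ g ⁻¹ᵁ U), g = 𝟙 S → g.appLE U U e = 𝟙 _ := by
    rintro g e rfl
    exact (Category.id_comp _).trans (S.presheaf.map_id _)
  have h := (Scheme.Hom.comp_appLE σ f U U (le_preimage_preimage_of_comp_eq_id hσ U)).symm.trans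
    (hid _ _ hσ)
  exact fun r => congr($h r)

lemma Scheme.Hom.bijective_stalkMap_comp_of_comp_eq_id (hσ : σ ≫ f = 𝟙 S) (s : S) :
    Function.Bijective ((σ.stalkMap s).hom.comp (f.stalkMap (σ.base s)).hom) := by
  have h := Scheme.Hom.stalkMap_congr_hom (σ ≫ f) (𝟙 S) hσ s
  rw [Scheme.Hom.stalkMap_comp] at h
  simp only [Scheme.Hom.stalkMap_id] at h
  rw [← CommRingCat.hom_comp, h]
  exact (S.presheaf.stalkCongr _).commRingCatIsoToRingEquiv.bijective

lemma IsAffineOpen.ker_stalkMap_eq_map_ker_appLE {V : Y.Opens} {U : S.Opens}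
    (hV : IsAffineOpen V) (hU : IsAffineOpen U) {e : U ≤ σ ⁻¹ᵁ V}
    (hψ : Function.Surjective (σ.appLE V U e)) (s : S) (hs : s ∈ U) :
    RingHom.ker (σ.stalkMap s).hom =
      (RingHom.ker (σ.appLE V U e).hom).map (Y.presheaf.germ V (σ.base s) (e hs)).hom := by
  let := Y.presheaf.algebra_section_stalk ⟨σ.base s, e hs⟩
  let := S.presheaf.algebra_section_stalk ⟨s, hs⟩
  have := hV.isLocalization_stalk ⟨σ.base s, e hs⟩
  have := hU.isLocalization_stalk ⟨s, hs⟩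
  refine IsLocalization.ker_eq_map_ker_of_comp_algebraMap
    (M := (hV.primeIdealOf ⟨σ.base s, e hs⟩).asIdeal.primeCompl)
    (N := (hU.primeIdealOf ⟨s, hs⟩).asIdeal.primeCompl) ?_ ?_
  · rw [← IsAffineOpen.comap_primeIdealOf_appLE V hV U hU e hs]
    exact Submonoid.map_comap_eq_of_surjective (f := (σ.appLE V U e).hom) hψ
      (hU.primeIdealOf ⟨s, hs⟩).asIdeal.primeCompl
  · ext b
    exact σ.stalkMap_germ_apply_eq_germ_appLE V U e s hs b

lemma IsAffineOpen.image_fromSpec_zeroLocus_ker_appLE_subset_range {V : Y.Opens} {U : S.Opens}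
    (hV : IsAffineOpen V) (hU : IsAffineOpen U) {e : U ≤ σ ⁻¹ᵁ V}
    (hψ : Function.Surjective (σ.appLE V U e)) :
    hV.fromSpec.base '' PrimeSpectrum.zeroLocus (RingHom.ker (σ.appLE V U e).hom) ⊆
      Set.range σ.base := by
  rintro _ ⟨q, hq, rfl⟩
  rw [← range_comap_of_surjective _ _ hψ] at hq
  obtain ⟨p, rfl⟩ := hq
  refine ⟨hU.fromSpec.base p, ?_⟩
  calc σ.base (hU.fromSpec.base p)
    _ = (hU.fromSpec ≫ σ).base p := (Scheme.Hom.comp_apply _ _ _).symm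
    _ = (Spec.map (σ.appLE V U e) ≫ hV.fromSpec).base p := by
      rw [IsAffineOpen.SpecMap_appLE_fromSpec]
    _ = _ := Scheme.Hom.comp_apply _ _ _

lemma IsAffineOpen.range_mem_nhds_of_map_ker_appLE_eq_bot {V : Y.Opens} {U : S.Opens}
    (hV : IsAffineOpen V) (hU : IsAffineOpen U) {e : U ≤ σ ⁻¹ᵁ V}
    (hψ : Function.Surjective (σ.appLE V U e)) (hfg : (RingHom.ker (σ.appLE V U e).hom).FG)
    {s : S} (hs : s ∈ U)
    (hstalk : (RingHom.ker (σ.appLE V U e).hom).map (Y.presheaf.germ V (σ.base s) (e hs)).hom = ⊥) :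
    Set.range σ.base ∈ nhds (σ.base s) := by
  set I := RingHom.ker (σ.appLE V U e).hom
  have : Module.Finite Γ(Y, V) I := Module.Finite.iff_fg.mpr hfg
  refine mem_nhds_iff.mpr ⟨hV.fromSpec.base '' (Module.support Γ(Y, V) I)ᶜ,
    (Set.image_mono I.compl_support_subset_zeroLocus).trans
      (hV.image_fromSpec_zeroLocus_ker_appLE_subset_range hU hψ),
    hV.fromSpec.isOpenEmbedding.isOpenMap _ Module.isClosed_support.isOpen_compl,
    hV.primeIdealOf ⟨σ.base s, e hs⟩, ?_, hV.fromSpec_primeIdealOf _⟩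
  let := Y.presheaf.algebra_section_stalk ⟨σ.base s, e hs⟩
  have := hV.isLocalization_stalk ⟨σ.base s, e hs⟩
  refine Module.notMem_support_iff'.mpr fun ⟨t, ht⟩ => ?_
  have hgerm : Y.presheaf.germ V (σ.base s) (e hs) t = 0 := by
    simpa [hstalk] using Ideal.mem_map_of_mem (Y.presheaf.germ V (σ.base s) (e hs)).hom ht
  obtain ⟨⟨r, hr⟩, hrt⟩ := (IsLocalization.map_eq_zero_iff
    (hV.primeIdealOf ⟨σ.base s, e hs⟩).asIdeal.primeCompl _ t).mp hgerm
  exact ⟨r, hr, Subtype.ext hrt⟩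

end AlgebraicGeometry

theorem statement19_general {Y S : Scheme} (f : Y ⟶ S) [IsFinite f]
    (σ : S ⟶ Y) (hσ : σ ≫ f = 𝟙 S)
    (hfib : ∀ s : S,
      Function.Bijective
        (Ideal.quotientMap
          (Ideal.map (f.stalkMap (σ.base s)).hom
            (IsLocalRing.maximalIdeal (S.presheaf.stalk (f.base (σ.base s)))))
          (f.stalkMap (σ.base s)).hom
          Ideal.le_comap_map)) :
    IsOpen (Set.range σ.base) := by
  refine isOpen_iff_mem_nhds.mpr ?_
  rintro _ ⟨s, rfl⟩
  obtain ⟨U, hU, hsU, -⟩ :=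
    exists_isAffineOpen_mem_and_subset (show s ∈ (⊤ : S.Opens) from trivial)
  have hretract := Scheme.Hom.leftInverse_appLE_app_of_comp_eq_id hσ U
  have hker := (hU.preimage f).ker_stalkMap_eq_map_ker_appLE hU hretract.surjective s hsU
  have hfg := RingHom.ker_fg_of_finite_of_leftInverse (f.finite_app U hU) hretract
  have hbot : RingHom.ker (σ.stalkMap s).hom = ⊥ :=
    IsLocalRing.ker_eq_bot_of_quotientMap_surjective _ _
      (Scheme.Hom.bijective_stalkMap_comp_of_comp_eq_id hσ s) (hker ▸ hfg.map _) (hfib s).2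
  exact (hU.preimage f).range_mem_nhds_of_map_ker_appLE_eq_bot hU hretract.surjective hfg hsU
    (hker ▸ hbot)

/-- Lemma 5.7, due to A. Ducros. Let `f : Y ⟶ S` be a finite morphism of
schemes, locally of finite presentation, and let `σ` be a section of `f`. If for every
`s : S` the local ring of the scheme-theoretic fiber of `f` over `s` at the point `σ s` is
the residue field `κ(s)` — equivalently, the canonical map
`κ(s) = 𝒪_{S,s}/𝔪_s → 𝒪_{Y,σ(s)} / 𝔪_s·𝒪_{Y,σ(s)}` is bijective — then `σ(S)` is open
in `Y`. -/
theorem statement19 {Y S : Scheme} (f : Y ⟶ S) [IsFinite f] [LocallyOfFinitePresentation f]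
    (σ : S ⟶ Y) (hσ : σ ≫ f = 𝟙 S)
    (hfib : ∀ s : S,
      Function.Bijective
        (Ideal.quotientMap
          (Ideal.map (f.stalkMap (σ.base s)).hom
            (IsLocalRing.maximalIdeal (S.presheaf.stalk (f.base (σ.base s)))))
          (f.stalkMap (σ.base s)).hom
          Ideal.le_comap_map)) :
    IsOpen (Set.range σ.base) :=
  statement19_general f σ hσ hfib
end
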